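/- arXiv:2301.02973 — 8 statements merged into one kernel-verified Lean document; each statement's English description precedes it below -/
import Mathlib

section
/- Let H be a hypergraph on vertex set V, and let u, v ∈ V be vertices such that every hyperedge containing v also contains u (written v ⪯ u). Let F be a graph, and suppose H contains a Berge-F (i.e., there is an injection from V(F) into V and a bijection φ from E(F) to E(H') for some subhypergraph H' of H, with each graph edge contained in its image) whose core vertices include v but not u. Then H also contains a Berge-F whose core vertices are the same except with u in place of v. -/
/-!
Since `u` is not a core vertex, the new core map is `Equiv.swap u v ∘ ψ`, and the same
hyperedges still work: the only core vertex that moves is `v`, which becomes `u`, and every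
hyperedge containing `v` also contains `u`.
-/

namespace Equiv

theorem swap_image_eq_insert_diff {V : Type*} [DecidableEq V] {S : Set V} {u v : V}
    (hv : v ∈ S) (hu : u ∉ S) : swap u v '' S = insert u (S \ {v}) := by
  have huv : u ≠ v := ne_of_mem_of_not_mem hv hu |>.symm
  ext w
  rw [image_eq_preimage_symm, symm_swap, Set.mem_preimage]
  by_cases hwu : w = u
  · subst hwu
    simpa using hv
  by_cases hwv : w = v
  · subst hwv
    simpa [hwu] using hu
  · simp [swap_apply_of_ne_of_ne hwu hwv, hwu, hwv]

theorem swap_apply_mem {V : Type*} [DecidableEq V] {e : Set V} {u v w : V}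
    (hvu : v ∈ e → u ∈ e) (hw : w ∈ e) (hwu : w ≠ u) : swap u v w ∈ e := by
  by_cases hwv : w = v
  · subst hwv
    simpa using hvu hw
  · rwa [swap_apply_of_ne_of_ne hwu hwv]

end Equiv

/-- If `v ⪯ u` (every hyperedge containing `v` contains `u`) and `H`
contains a Berge-`F` whose core vertices include `v` but not `u`, then `H` contains a
Berge-`F` with the same core vertices except `u` in place of `v`. -/
theorem stmt0 {V α : Type*} (H : Set (Set V)) (u v : V)
    (hpre : ∀ e ∈ H, v ∈ e → u ∈ e)
    (F : SimpleGraph α)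
    (ψ : α → V) (hψ : Function.Injective ψ)
    (φ : Sym2 α → Set V) (hφinj : Set.InjOn φ F.edgeSet)
    (hφ : ∀ e ∈ F.edgeSet, φ e ∈ H ∧ ∀ x ∈ e, ψ x ∈ φ e)
    (hv : v ∈ Set.range ψ) (hu : u ∉ Set.range ψ) :
    ∃ ψ' : α → V, Function.Injective ψ' ∧
      Set.range ψ' = insert u (Set.range ψ \ {v}) ∧
      ∃ φ' : Sym2 α → Set V, Set.InjOn φ' F.edgeSet ∧
        ∀ e ∈ F.edgeSet, φ' e ∈ H ∧ ∀ x ∈ e, ψ' x ∈ φ' e := by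
  classical
  refine ⟨Equiv.swap u v ∘ ψ, (Equiv.injective _).comp hψ, ?_, φ, hφinj, fun e he => ?_⟩
  · rw [Set.range_comp, Equiv.swap_image_eq_insert_diff hv hu]
  · obtain ⟨heH, hcore⟩ := hφ e he
    exact ⟨heH, fun x hx =>
      Equiv.swap_apply_mem (hpre _ heH) (hcore x hx) fun hxu => hu ⟨x, hxu⟩⟩
end

section
/- Fix k ≥ 3. Let C(k,4) be the k-uniform hypergraph on vertex set {c₁,...,c₅} ∪ D with D = {d₁,...,d_{k−3}}, whose hyperedges are the five sets {c_i, c_{i+1}, c_{i+2}} ∪ D for i ∈ {1,...,5}, indices modulo 5. Then every set of three distinct vertices of C(k,4) is the set of core vertices of a Berge-K₃ (Berge triangle) in C(k,4). -/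
/-!
Every vertex of `D` lies in every edge, so collapsing `D` to the single vertex `5` maps
`C(k,4)` onto `C(4,4)` edge by edge, preserving incidences. A Berge triangle of `C(k,4)` is thus
the same as one of `C(4,4)` on core vertices that may coincide only at the collapsed vertex, and
for this six-vertex hypergraph the claim is a finite check.
-/

/-- The hyperedges of `C(k,4)`: vertices `0,...,4` are `c₁,...,c₅` and
`D = {5,...,k+1}` (so `|D| = k-3`); the edges are `{cᵢ, cᵢ₊₁, cᵢ₊₂} ∪ D`, indices mod 5. -/
def C4edges (k : ℕ) : Finset (Finset ℕ) :=
  (Finset.range 5).image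
    (fun i => ({i, (i+1) % 5, (i+2) % 5} : Finset ℕ) ∪ Finset.Ico 5 (k+2))

/-- The vertex set of `C(k,4)`. -/
def C4verts (k : ℕ) : Finset ℕ := Finset.range (k+2)

def C4tri (i : ℕ) : Finset ℕ := {i, (i+1) % 5, (i+2) % 5}

def C4edge (k i : ℕ) : Finset ℕ := C4tri i ∪ Finset.Ico 5 (k+2)

lemma C4edge_mem_C4edges (k : ℕ) (i : Fin 5) : C4edge k i ∈ C4edges k :=
  Finset.mem_image_of_mem _ (Finset.mem_range.2 i.isLt)

lemma C4tri_injective : Function.Injective (fun i : Fin 5 => C4tri i) := by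
  decide

lemma C4edge_filter_lt_five (k : ℕ) (i : Fin 5) :
    (C4edge k i).filter (· < 5) = C4tri i := by
  ext v
  have hi := i.isLt
  simp only [C4edge, C4tri, Finset.mem_filter, Finset.mem_union, Finset.mem_insert,
    Finset.mem_singleton, Finset.mem_Ico]
  omega

lemma C4edge_ne (k : ℕ) {i j : Fin 5} (hij : i ≠ j) : C4edge k i ≠ C4edge k j := by
  intro h
  apply hij (C4tri_injective _)
  simp only [← C4edge_filter_lt_five k, h]

lemma mem_C4edge_iff_min_mem_C4edge_four {k v : ℕ} (i : ℕ) (hv : v < k + 2) :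
    v ∈ C4edge k i ↔ min v 5 ∈ C4edge 4 i := by
  simp only [C4edge, Finset.mem_union, Finset.mem_Ico]
  rcases lt_or_ge v 5 with h | h
  · simp [min_eq_left h.le, Nat.not_le.2 h]
  · simp [h, hv]

lemma exists_berge_triangle_C4edge_four : ∀ x y z : Fin 6,
    (x = y → x = 5) → (y = z → y = 5) → (x = z → x = 5) →
    ∃ i j l : Fin 5, i ≠ j ∧ j ≠ l ∧ i ≠ l ∧
      ↑x ∈ C4edge 4 i ∧ ↑y ∈ C4edge 4 i ∧ ↑y ∈ C4edge 4 j ∧ ↑z ∈ C4edge 4 j ∧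
      ↑x ∈ C4edge 4 l ∧ ↑z ∈ C4edge 4 l := by
  decide

theorem stmt3_general (k : ℕ) (x y z : ℕ)
    (hx : x ∈ C4verts k) (hy : y ∈ C4verts k) (hz : z ∈ C4verts k)
    (hxy : x ≠ y) (hyz : y ≠ z) (hxz : x ≠ z) :
    ∃ e₁ ∈ C4edges k, ∃ e₂ ∈ C4edges k, ∃ e₃ ∈ C4edges k,
      e₁ ≠ e₂ ∧ e₂ ≠ e₃ ∧ e₁ ≠ e₃ ∧
      x ∈ e₁ ∧ y ∈ e₁ ∧ y ∈ e₂ ∧ z ∈ e₂ ∧ x ∈ e₃ ∧ z ∈ e₃ := by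
  simp only [C4verts, Finset.mem_range] at hx hy hz
  have collapse_ne {u v : ℕ} (huv : u ≠ v) :
      (⟨min u 5, by omega⟩ : Fin 6) = ⟨min v 5, by omega⟩ → (⟨min u 5, by omega⟩ : Fin 6) = 5 := by
    simp only [Fin.ext_iff]
    omega
  obtain ⟨i, j, l, hij, hjl, hil, hxi, hyi, hyj, hzj, hxl, hzl⟩ :=
    exists_berge_triangle_C4edge_four _ _ _ (collapse_ne hxy) (collapse_ne hyz) (collapse_ne hxz)
  have uncollapse := @mem_C4edge_iff_min_mem_C4edge_four k
  exact ⟨_, C4edge_mem_C4edges k i, _, C4edge_mem_C4edges k j, _, C4edge_mem_C4edges k l,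
    C4edge_ne k hij, C4edge_ne k hjl, C4edge_ne k hil,
    (uncollapse _ hx).2 hxi, (uncollapse _ hy).2 hyi, (uncollapse _ hy).2 hyj,
    (uncollapse _ hz).2 hzj, (uncollapse _ hx).2 hxl, (uncollapse _ hz).2 hzl⟩

/-- every three distinct vertices of `C(k,4)` are the core vertices of a
Berge triangle: there are three distinct hyperedges `e₁,e₂,e₃` with `{x,y} ⊆ e₁`,
`{y,z} ⊆ e₂`, `{x,z} ⊆ e₃`. -/
theorem stmt3 (k : ℕ) (hk : 3 ≤ k) (x y z : ℕ)
    (hx : x ∈ C4verts k) (hy : y ∈ C4verts k) (hz : z ∈ C4verts k)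
    (hxy : x ≠ y) (hyz : y ≠ z) (hxz : x ≠ z) :
    ∃ e₁ ∈ C4edges k, ∃ e₂ ∈ C4edges k, ∃ e₃ ∈ C4edges k,
      e₁ ≠ e₂ ∧ e₂ ≠ e₃ ∧ e₁ ≠ e₃ ∧
      x ∈ e₁ ∧ y ∈ e₁ ∧ y ∈ e₂ ∧ z ∈ e₂ ∧ x ∈ e₃ ∧ z ∈ e₃ :=
  stmt3_general k x y z hx hy hz hxy hyz hxz
end

section
/- Fix k ≥ 3 and ℓ ≥ 5. Let C(k,ℓ) be the k-uniform hypergraph from Construction: start with the graph K = K_ℓ minus the edge c₁c₂ on C = {c₁,...,c_ℓ}, with D = {d₁,...,d_{k−3}}, and extend each 2-edge e of K to a k-set as follows: if c₁ ∈ e and c₂ ∉ e, extend to e ∪ {c₂} ∪ D; if e = {c₂,c₃}, to e ∪ {c₄} ∪ D; if e = {c₂,c₄}, to e ∪ {c₅} ∪ D; if c₂ ∈ e, c₁ ∉ e, c₃ ∉ e, c₄ ∉ e, to e ∪ {c₃} ∪ D; if c₁,c₂ ∉ e, to e ∪ {c₁} ∪ D. Then for every pair of distinct vertices x, y of C(k,ℓ),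 adding the 2-element edge {x,y} creates a Berge-K_ℓ using {x,y}. -/
/-- A Berge edge map for a clique on core vertex set `core` in a hypergraph `H`:
an assignment of distinct hyperedges to the pairs of distinct core vertices,
each pair contained in its assigned hyperedge. -/
def BergeCliqueMap {V : Type*} (H : Finset (Finset V)) (core : Finset V)
    (φ : Sym2 V → Finset V) : Prop :=
  Set.InjOn φ {p : Sym2 V | ∃ x ∈ core, ∃ y ∈ core, x ≠ y ∧ p = s(x, y)} ∧
  ∀ x ∈ core, ∀ y ∈ core, x ≠ y →
    φ s(x, y) ∈ H ∧ x ∈ φ s(x, y) ∧ y ∈ φ s(x, y)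

/-- `H` contains a Berge-`K_l` with the given set of core vertices. -/
def HasBergeCliqueOn {V : Type*} (H : Finset (Finset V)) (core : Finset V) : Prop :=
  ∃ φ : Sym2 V → Finset V, BergeCliqueMap H core φ

/-- `H` contains a Berge-`K_l`. -/
def HasBergeClique {V : Type*} (l : ℕ) (H : Finset (Finset V)) : Prop :=
  ∃ core : Finset V, core.card = l ∧ HasBergeCliqueOn H core

/-- `H` contains a Berge-`K_l` using the hyperedge `e`. -/
def HasBergeCliqueUsing {V : Type*} (l : ℕ) (H : Finset (Finset V)) (e : Finset V) : Prop :=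
  ∃ core : Finset V, core.card = l ∧ ∃ φ : Sym2 V → Finset V,
    BergeCliqueMap H core φ ∧ ∃ x ∈ core, ∃ y ∈ core, x ≠ y ∧ φ s(x, y) = e

/-- The index of the extra `c`-vertex used to extend the pair `{i,j}` (an edge of
`K_ℓ − c₁c₂`, where `c₁,...,c₅` have indices `0,...,4`) to a `k`-set, following the
construction: a pair containing `c₁` but not `c₂` gets `c₂`; `{c₂,c₃}` gets `c₄`;
`{c₂,c₄}` gets `c₅`; a pair containing `c₂` but none of `c₁,c₃,c₄` gets `c₃`;
a pair avoiding `c₁,c₂` gets `c₁`. -/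
def extraIdx (i j : ℕ) : ℕ :=
  if (i = 0 ∨ j = 0) ∧ ¬(i = 1 ∨ j = 1) then 1
  else if (i = 1 ∧ j = 2) ∨ (i = 2 ∧ j = 1) then 3
  else if (i = 1 ∧ j = 3) ∨ (i = 3 ∧ j = 1) then 4
  else if i = 1 ∨ j = 1 then 2
  else 0

/-- The hyperedge of `C(k,l)` obtained by extending the pair `{i,j}`:
`{cᵢ, cⱼ, c_{extraIdx i j}} ∪ D`, where `D = {l, l+1, ..., l+k-4}` (so `|D| = k-3`). -/
def C5edge (k l i j : ℕ) : Finset ℕ :=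
  ({i, j, extraIdx i j} : Finset ℕ) ∪ Finset.Ico l (l + (k - 3))

/-- The hyperedges of `C(k,l)` for `l ≥ 5`: one `k`-edge for each edge of
`K_l − c₁c₂` (vertices `0,...,l-1` are `c₁,...,c_l`). -/
def C5edges (k l : ℕ) : Finset (Finset ℕ) :=
  (((Finset.range l) ×ˢ (Finset.range l)).filter
      (fun p => p.1 < p.2 ∧ ¬(p.1 = 0 ∧ p.2 = 1))).image
    (fun p => C5edge k l p.1 p.2)

/-- The vertex set of `C(k,l)` for `l ≥ 5`. -/
def C5verts (k l : ℕ) : Finset ℕ := Finset.range (l + (k - 3))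


/-!
Put the added edge `{x, y}` on the missing pair `c₁c₂` of `K_ℓ − c₁c₂`: together with the
hyperedges of `C(k, ℓ)` it forms an injective family indexed by all pairs of
`C = {c₁, …, c_ℓ}`. A Berge-`K_ℓ` on `C` then comes from a routing, an injective map `ρ` on pairs
sending `{x, y}` to `c₁c₂` and every other pair to a pair whose hyperedge contains it. A short
cycle of pairs suffices, e.g. `{cᵢ, cⱼ} ↦ c₁c₂ ↦ c₁cᵢ ↦ cᵢcⱼ` for `i, j ≥ 3`, since the hyperedge
of `c₁cᵢ` contains `c₂` and that of `cᵢcⱼ` contains `c₁`. A vertex of `D` lies in every hyperedge,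
so if `x` or `y` is in `D` it can first be swapped with `c₁` or `c₂` and take its place.
-/

open Finset Function Equiv

theorem hasBergeCliqueUsing_of_injective_route {V : Type*} {H : Finset (Finset V)}
    {P : Set (Sym2 V)} {F : Sym2 V → Finset V} (hF : Set.InjOn F P)
    (hFH : Set.MapsTo F P H) (core : Finset V) {σ : Sym2 V → Sym2 V} (hσ : Injective σ)
    (hroute : ∀ a ∈ core, ∀ b ∈ core, a ≠ b →
      σ s(a, b) ∈ P ∧ a ∈ F (σ s(a, b)) ∧ b ∈ F (σ s(a, b)))
    {x y : V} (hx : x ∈ core) (hy : y ∈ core) (hxy : x ≠ y) :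
    HasBergeCliqueUsing core.card H (F (σ s(x, y))) := by
  refine ⟨core, rfl, F ∘ σ, ⟨?_, fun a ha b hb hab => ?_⟩, x, hx, y, hy, hxy, rfl⟩
  · rintro _ ⟨a, ha, b, hb, hab, rfl⟩ _ ⟨c, hc, d, hd, hcd, rfl⟩ h
    exact hσ (hF (hroute a ha b hb hab).1 (hroute c hc d hd hcd).1 h)
  · obtain ⟨hP, ha, hb⟩ := hroute a ha b hb hab
    exact ⟨hFH hP, ha, hb⟩

theorem extraIdx_comm (i j : ℕ) : extraIdx i j = extraIdx j i := by
  unfold extraIdx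
  split_ifs <;> omega

theorem extraIdx_zero_left {j : ℕ} (hj : 2 ≤ j) : extraIdx 0 j = 1 := by
  rw [extraIdx, if_pos (by omega)]

theorem extraIdx_one_left {j : ℕ} (hj : 4 ≤ j) : extraIdx 1 j = 2 := by
  unfold extraIdx
  split_ifs <;> omega

theorem extraIdx_of_two_le {i j : ℕ} (hi : 2 ≤ i) (hj : 2 ≤ j) : extraIdx i j = 0 := by
  unfold extraIdx
  split_ifs <;> omega

theorem extraIdx_spec {i j : ℕ} (hij : i < j) (h01 : ¬(i = 0 ∧ j = 1)) :
    (i = 0 ∧ extraIdx i j = 1) ∨ (i = 1 ∧ j = 2 ∧ extraIdx i j = 3) ∨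
    (i = 1 ∧ j = 3 ∧ extraIdx i j = 4) ∨ (i = 1 ∧ 4 ≤ j ∧ extraIdx i j = 2) ∨
    (2 ≤ i ∧ extraIdx i j = 0) := by
  obtain rfl | rfl | hi := show i = 0 ∨ i = 1 ∨ 2 ≤ i by omega
  · exact Or.inl ⟨rfl, extraIdx_zero_left (by omega)⟩
  · obtain rfl | rfl | hj := show j = 2 ∨ j = 3 ∨ 4 ≤ j by omega
    · exact Or.inr (Or.inl ⟨rfl, rfl, rfl⟩)
    · exact Or.inr (Or.inr (Or.inl ⟨rfl, rfl, rfl⟩))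
    · exact Or.inr (Or.inr (Or.inr (Or.inl ⟨rfl, hj, extraIdx_one_left hj⟩)))
  · exact Or.inr (Or.inr (Or.inr (Or.inr ⟨hi, extraIdx_of_two_le hi (by omega)⟩)))

theorem mem_C5edge {k l i j z : ℕ} :
    z ∈ C5edge k l i j ↔ z = i ∨ z = j ∨ z = extraIdx i j ∨ l ≤ z ∧ z < l + (k - 3) := by
  simp [C5edge]

theorem C5edge_comm (k l i j : ℕ) : C5edge k l i j = C5edge k l j i := by
  rw [C5edge, C5edge, extraIdx_comm, insert_comm]

def C5edgeOf (k l : ℕ) : Sym2 ℕ → Finset ℕ :=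
  Sym2.lift ⟨C5edge k l, C5edge_comm k l⟩

@[simp]
theorem C5edgeOf_mk (k l i j : ℕ) : C5edgeOf k l s(i, j) = C5edge k l i j := rfl

theorem mem_C5edgeOf_of_mem_Ico {k l a : ℕ} (ha : a ∈ Ico l (l + (k - 3))) (p : Sym2 ℕ) :
    a ∈ C5edgeOf k l p := by
  induction p using Sym2.ind with
  | _ i j => exact mem_union_right _ ha

theorem mem_C5edgeOf_of_mem {k l a : ℕ} {p : Sym2 ℕ} (ha : a ∈ p) : a ∈ C5edgeOf k l p := by
  induction p using Sym2.ind with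
  | _ i j => rw [Sym2.mem_iff] at ha; rw [C5edgeOf_mk, mem_C5edge]; omega

def pairsBelow (l : ℕ) : Set (Sym2 ℕ) := {p | ¬p.IsDiag ∧ ∀ a ∈ p, a < l}

@[simp]
theorem mk_mem_pairsBelow {l i j : ℕ} : s(i, j) ∈ pairsBelow l ↔ i ≠ j ∧ i < l ∧ j < l := by
  simp [pairsBelow]

theorem exists_lt_of_mem_pairsBelow {l : ℕ} {p : Sym2 ℕ} (hp : p ∈ pairsBelow l) :
    ∃ i j, i < j ∧ j < l ∧ p = s(i, j) := by
  induction p using Sym2.ind with | _ i j => ?_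
  rw [mk_mem_pairsBelow] at hp
  rcases lt_or_gt_of_ne hp.1 with h | h
  · exact ⟨i, j, h, hp.2.2, rfl⟩
  · exact ⟨j, i, h, hp.2.1, Sym2.eq_swap⟩

theorem C5edgeOf_injOn (k l : ℕ) : Set.InjOn (C5edgeOf k l) (pairsBelow l \ {s(0, 1)}) := by
  rintro p ⟨hp, hp01⟩ q ⟨hq, hq01⟩ h
  obtain ⟨i, j, hij, hjl, rfl⟩ := exists_lt_of_mem_pairsBelow hp
  obtain ⟨i', j', hij', hjl', rfl⟩ := exists_lt_of_mem_pairsBelow hq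
  simp only [Set.mem_singleton_iff, Sym2.eq_iff] at hp01 hq01
  rw [C5edgeOf_mk, C5edgeOf_mk] at h
  have hs := extraIdx_spec hij (by omega)
  have hs' := extraIdx_spec hij' (by omega)
  have hi : i ∈ C5edge k l i' j' := h ▸ mem_C5edge.2 (Or.inl rfl)
  have hj : j ∈ C5edge k l i' j' := h ▸ mem_C5edge.2 (Or.inr (Or.inl rfl))
  have hi' : i' ∈ C5edge k l i j := h.symm ▸ mem_C5edge.2 (Or.inl rfl)
  have hj' : j' ∈ C5edge k l i j := h.symm ▸ mem_C5edge.2 (Or.inr (Or.inl rfl))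
  rw [mem_C5edge] at hi hj hi' hj'
  rw [Sym2.eq_iff]
  omega

theorem C5edgeOf_ne_pair {k l : ℕ} {p : Sym2 ℕ} (hp : p ∈ pairsBelow l \ {s(0, 1)}) (x y : ℕ) :
    C5edgeOf k l p ≠ {x, y} := by
  obtain ⟨⟨i, j, hij, hjl, rfl⟩, hp01⟩ := And.imp_left exists_lt_of_mem_pairsBelow hp
  simp only [Set.mem_singleton_iff, Sym2.eq_iff] at hp01
  have hs := extraIdx_spec hij (by omega)
  intro h
  rw [C5edgeOf_mk] at h
  have hmem : ∀ z ∈ C5edge k l i j, z = x ∨ z = y := by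
    simp [h]
  have := hmem i (mem_C5edge.2 (Or.inl rfl))
  have := hmem j (mem_C5edge.2 (Or.inr (Or.inl rfl)))
  have := hmem (extraIdx i j) (mem_C5edge.2 (Or.inr (Or.inr (Or.inl rfl))))
  omega

theorem C5edgeOf_mem_C5edges {k l : ℕ} {p : Sym2 ℕ} (hp : p ∈ pairsBelow l \ {s(0, 1)}) :
    C5edgeOf k l p ∈ C5edges k l := by
  obtain ⟨⟨i, j, hij, hjl, rfl⟩, hp01⟩ := And.imp_left exists_lt_of_mem_pairsBelow hp
  simp only [Set.mem_singleton_iff, Sym2.eq_iff] at hp01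
  exact mem_image_of_mem _ (by simp only [mem_filter, mem_product, mem_range]; omega)

theorem injOn_update_C5edgeOf (k l x y : ℕ) :
    Set.InjOn (update (C5edgeOf k l) s(0, 1) {x, y}) (pairsBelow l) := by
  intro p hp q hq h
  by_cases hp01 : p = s(0, 1) <;> by_cases hq01 : q = s(0, 1)
  · rw [hp01, hq01]
  · rw [hp01, update_self, update_of_ne hq01] at h
    exact absurd h.symm (C5edgeOf_ne_pair ⟨hq, hq01⟩ x y)
  · rw [hq01, update_self, update_of_ne hp01] at h
    exact absurd h (C5edgeOf_ne_pair ⟨hp, hp01⟩ x y)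
  · rw [update_of_ne hp01, update_of_ne hq01] at h
    exact C5edgeOf_injOn k l ⟨hp, hp01⟩ ⟨hq, hq01⟩ h

theorem mapsTo_update_C5edgeOf (k l x y : ℕ) :
    Set.MapsTo (update (C5edgeOf k l) s(0, 1) {x, y}) (pairsBelow l)
      (insert {x, y} (C5edges k l) : Finset (Finset ℕ)) := by
  intro p hp
  by_cases hp01 : p = s(0, 1)
  · rw [hp01, update_self]
    exact mem_insert_self _ _
  · rw [update_of_ne hp01]
    exact mem_insert_of_mem (C5edgeOf_mem_C5edges ⟨hp, hp01⟩)

def IsRelabeling (k l : ℕ) (τ : Perm ℕ) : Prop :=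
  ∀ a, τ a < l → τ a = a ∨ a ∈ Ico l (l + (k - 3))

def IsRouting (k l : ℕ) (ρ : Sym2 ℕ → Sym2 ℕ) (p : Sym2 ℕ) : Prop :=
  Injective ρ ∧ ρ p = s(0, 1) ∧
    ∀ q ∈ pairsBelow l, q ≠ p → ρ q ∈ pairsBelow l ∧ ∀ a ∈ q, a ∈ C5edgeOf k l (ρ q)

theorem hasBergeCliqueUsing_of_isRouting {k l x y : ℕ} (hl : 2 ≤ l) {τ : Perm ℕ}
    (hτ : IsRelabeling k l τ) (hx : τ x < l) (hy : τ y < l) (hxy : x ≠ y) {ρ : Sym2 ℕ → Sym2 ℕ}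
    (hρ : IsRouting k l ρ s(τ x, τ y)) :
    HasBergeCliqueUsing l (insert {x, y} (C5edges k l)) {x, y} := by
  obtain ⟨hρinj, hρxy, hρroute⟩ := hρ
  set core := (range l).map τ.symm.toEmbedding
  have mem_core : ∀ a, a ∈ core ↔ τ a < l := by simp [core, mem_map_equiv]
  have key := hasBergeCliqueUsing_of_injective_route (injOn_update_C5edgeOf k l x y)
    (mapsTo_update_C5edgeOf k l x y) core (hρinj.comp (Sym2.map.injective τ.injective)) ?_
    ((mem_core x).2 hx) ((mem_core y).2 hy) hxy
  · simpa [core, hρxy] using key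
  intro a ha b hb hab
  rw [mem_core] at ha hb
  simp only [comp_apply, Sym2.map_mk]
  have hq : s(τ a, τ b) ∈ pairsBelow l := mk_mem_pairsBelow.2 ⟨τ.injective.ne hab, ha, hb⟩
  by_cases hab_xy : s(a, b) = s(x, y)
  · have : s(τ a, τ b) = s(τ x, τ y) := by
      rw [← Sym2.map_mk, hab_xy, Sym2.map_mk]
    rw [this, hρxy, update_self]
    rw [Sym2.eq_iff] at hab_xy
    refine ⟨mk_mem_pairsBelow.2 ⟨by omega, by omega, by omega⟩, ?_, ?_⟩ <;> simp <;> tauto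
  · have hne : s(τ a, τ b) ≠ s(τ x, τ y) := fun h =>
      hab_xy (Sym2.map.injective τ.injective (by simpa using h))
    obtain ⟨hP, hmem⟩ := hρroute _ hq hne
    rw [update_of_ne (hρxy ▸ hρinj.ne hne)]
    have hcov : ∀ c, τ c < l → τ c ∈ s(τ a, τ b) → c ∈ C5edgeOf k l (ρ s(τ a, τ b)) :=
      fun c hc hc' => (hτ c hc).elim (fun h => h ▸ hmem _ hc')
        (fun h => mem_C5edgeOf_of_mem_Ico h _)
    exact ⟨hP, hcov a ha (Sym2.mem_mk_left _ _), hcov b hb (Sym2.mem_mk_right _ _)⟩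

theorem isRouting_id (k l : ℕ) : IsRouting k l id s(0, 1) :=
  ⟨injective_id, rfl, fun _ hq _ => ⟨hq, fun _ ha => mem_C5edgeOf_of_mem ha⟩⟩

theorem isRouting_zero_left {k l j : ℕ} (hj : 2 ≤ j) (hjl : j < l) :
    IsRouting k l (Equiv.swap s(0, 1) s(0, j)) s(0, j) := by
  refine ⟨(Equiv.swap _ _).injective, swap_apply_right _ _, fun q hq hne => ?_⟩
  obtain ⟨a, b, hab, hbl, rfl⟩ := exists_lt_of_mem_pairsBelow hq
  have := extraIdx_zero_left hj
  rw [swap_apply_def]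
  split_ifs <;>
    simp only [mk_mem_pairsBelow, Sym2.forall_mem_pair, C5edgeOf_mk, mem_C5edge, Sym2.eq_iff,
      Ne, true_or, or_true, and_true] at * <;> omega

theorem isRouting_of_two_le {k l i j : ℕ} (hi : 2 ≤ i) (hij : i < j) (hjl : j < l) :
    IsRouting k l (Equiv.swap s(0, 1) s(0, i) * Equiv.swap s(0, i) s(i, j)) s(i, j) := by
  refine ⟨(Equiv.swap _ _ * Equiv.swap _ _).injective, ?_, fun q hq hne => ?_⟩
  · simp
  obtain ⟨a, b, hab, hbl, rfl⟩ := exists_lt_of_mem_pairsBelow hq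
  have := extraIdx_zero_left hi
  have := extraIdx_of_two_le hi (by omega : 2 ≤ j)
  rw [Perm.mul_apply, swap_apply_def, swap_apply_def]
  split_ifs <;>
    simp only [mk_mem_pairsBelow, Sym2.forall_mem_pair, C5edgeOf_mk, mem_C5edge, Sym2.eq_iff,
      Ne, true_or, or_true, and_true] at * <;> omega

theorem isRouting_one_left {k l j : ℕ} (hl : 5 ≤ l) (hj : 2 ≤ j) (hjl : j < l) :
    IsRouting k l (Equiv.swap s(0, 1) s(0, extraIdx 1 j) *
      Equiv.swap s(0, extraIdx 1 j) s(extraIdx 1 j, j) *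
      Equiv.swap s(extraIdx 1 j, j) s(1, j)) s(1, j) := by
  have hs := extraIdx_spec (by omega : 1 < j) (by omega)
  set m := extraIdx 1 j
  have h0m := extraIdx_zero_left (by omega : 2 ≤ m)
  have hmj := extraIdx_of_two_le (by omega : 2 ≤ m) hj
  refine ⟨Equiv.injective _, by simp, fun q hq hne => ?_⟩
  obtain ⟨a, b, hab, hbl, rfl⟩ := exists_lt_of_mem_pairsBelow hq
  rw [Perm.mul_apply, Perm.mul_apply, swap_apply_def, swap_apply_def, swap_apply_def]
  split_ifs <;>
    simp only [mk_mem_pairsBelow, Sym2.forall_mem_pair, C5edgeOf_mk, mem_C5edge, Sym2.eq_iff,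
      Ne, true_or, or_true, and_true] at * <;> omega

theorem exists_isRouting {k l : ℕ} (hl : 5 ≤ l) {p : Sym2 ℕ} (hp : p ∈ pairsBelow l) :
    ∃ ρ, IsRouting k l ρ p := by
  obtain ⟨i, j, hij, hjl, rfl⟩ := exists_lt_of_mem_pairsBelow hp
  obtain rfl | rfl | hi := show i = 0 ∨ i = 1 ∨ 2 ≤ i by omega
  · obtain rfl | hj := show j = 1 ∨ 2 ≤ j by omega
    · exact ⟨id, isRouting_id k l⟩
    · exact ⟨_, isRouting_zero_left hj hjl⟩
  · exact ⟨_, isRouting_one_left hl hij hjl⟩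
  · exact ⟨_, isRouting_of_two_le hi hij hjl⟩

theorem exists_relabeling {k l x y : ℕ} (hl : 2 ≤ l) (hx : x < l + (k - 3))
    (hy : y < l + (k - 3)) (hxy : x ≠ y) :
    ∃ τ : Perm ℕ, IsRelabeling k l τ ∧ τ x < l ∧ τ y < l := by
  by_cases hxl : x < l <;> by_cases hyl : y < l
  · exact ⟨1, fun a _ => Or.inl rfl, hxl, hyl⟩
  · refine ⟨Equiv.swap (if x = 0 then 1 else 0) y, fun a ha => ?_, ?_, ?_⟩ <;>
      simp only [swap_apply_def, mem_Ico] at * <;> split_ifs at * <;> omega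
  · refine ⟨Equiv.swap (if y = 0 then 1 else 0) x, fun a ha => ?_, ?_, ?_⟩ <;>
      simp only [swap_apply_def, mem_Ico] at * <;> split_ifs at * <;> omega
  · refine ⟨Equiv.swap 0 x * Equiv.swap 1 y, fun a ha => ?_, ?_, ?_⟩ <;>
      simp only [Perm.mul_apply, swap_apply_def, mem_Ico] at * <;> split_ifs at * <;> omega

theorem stmt5_general (k l : ℕ) (hl : 5 ≤ l) (x y : ℕ)
    (hx : x ∈ C5verts k l) (hy : y ∈ C5verts k l) (hxy : x ≠ y) :
    HasBergeCliqueUsing l (insert ({x, y} : Finset ℕ) (C5edges k l)) {x, y} := by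
  rw [C5verts, mem_range] at hx hy
  obtain ⟨τ, hτ, hτx, hτy⟩ := exists_relabeling (by omega) hx hy hxy
  obtain ⟨ρ, hρ⟩ := exists_isRouting (k := k) hl
    (mk_mem_pairsBelow.2 ⟨τ.injective.ne hxy, hτx, hτy⟩)
  exact hasBergeCliqueUsing_of_isRouting (by omega) hτ hτx hτy hxy hρ

/-- for `k ≥ 3`, `ℓ ≥ 5`, every pair of distinct vertices of `C(k,ℓ)` is
ℓ-good: adding the 2-element edge `{x,y}` creates a Berge-`K_ℓ` using `{x,y}`. -/
theorem stmt5 (k l : ℕ) (hk : 3 ≤ k) (hl : 5 ≤ l) (x y : ℕ)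
    (hx : x ∈ C5verts k l) (hy : y ∈ C5verts k l) (hxy : x ≠ y) :
    HasBergeCliqueUsing l (insert ({x, y} : Finset ℕ) (C5edges k l)) {x, y} :=
  stmt5_general k l hl x y hx hy hxy
end

section
/- Fix k ≥ 3 and ℓ ≥ 4. The hypergraph S(n,k,ℓ) of Construction contains no Berge-K_ℓ. Specifically: the vertex v has only ℓ − 2 neighbors of degree at least ℓ − 1, so v cannot be a core vertex of a Berge-K_ℓ; any Berge-K_ℓ would have all core vertices in V(C(k,ℓ)), but only binom(ℓ,2) − 1 hyperedges of S contain at least two vertices of V(C(k,ℓ)), which is fewer than the binom(ℓ,2) hyperedges needed. -/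
/-- The hyperedges of `C(k,l)`: the tight-cycle construction when `l = 4`, and the
`K_l − c₁c₂` extension construction when `l ≥ 5`. -/
def Cedges (k l : ℕ) : Finset (Finset ℕ) := if l = 4 then C4edges k else C5edges k l

/-- The vertex set of `C(k,l)`, of size `k+2` when `l = 4` and `l + k − 3` otherwise. -/
def Cverts (k l : ℕ) : Finset ℕ :=
  Finset.range (if l = 4 then k + 2 else l + (k - 3))

/-!
A core vertex of a Berge-`K_ℓ` lies in at least `ℓ - 1` hyperedges. A vertex of `Aᵢ` or `Bᵢ`
lies only in the `ℓ - 2` hyperedges `Aᵢ ∪ {c_j}`, resp. `Bᵢ ∪ {v, c_j}`, so it is not a core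
vertex; then every core vertex sharing a hyperedge with `v` is some `c_j`, so `v` is not a core
vertex either. Hence the core lies in `V(C(k,ℓ))`, which every other hyperedge meets in a single
vertex, so all `binom(ℓ,2)` hyperedges of the Berge-`K_ℓ` belong to `C(k,ℓ)`, which has fewer.
-/

open Finset Function

namespace BergeCliqueMap

variable {V : Type*} {H : Finset (Finset V)} {core : Finset V} {φ : Sym2 V → Finset V}

theorem card_sub_one_le_degree [DecidableEq V] (hφ : BergeCliqueMap H core φ) {x : V}
    (hx : x ∈ core) : #core - 1 ≤ #{e ∈ H | x ∈ e} := by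
  rw [← card_erase_of_mem hx]
  refine card_le_card_of_injOn (fun y => φ s(x, y)) (fun y hy => ?_) (fun y hy y' hy' h => ?_)
  · obtain ⟨hyx, hy⟩ := mem_erase.1 hy
    obtain ⟨he, hxe, -⟩ := hφ.2 x hx y hy hyx.symm
    exact mem_filter.2 ⟨he, hxe⟩
  · obtain ⟨hyx, hy⟩ := mem_erase.1 hy
    obtain ⟨hy'x, hy'⟩ := mem_erase.1 hy'
    exact Sym2.congr_right.1
      (hφ.1 ⟨x, hx, y, hy, hyx.symm, rfl⟩ ⟨x, hx, y', hy', hy'x.symm, rfl⟩ h)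

theorem choose_two_le_card [DecidableEq V] (hφ : BergeCliqueMap H core φ)
    {E : Finset (Finset V)} (hE : ∀ x ∈ core, ∀ y ∈ core, x ≠ y → φ s(x, y) ∈ E) :
    (#core).choose 2 ≤ #E := by
  have hpairs : (↑(core.offDiag.image Sym2.mk.uncurry) : Set (Sym2 V)) =
      {p | ∃ x ∈ core, ∃ y ∈ core, x ≠ y ∧ p = s(x, y)} := by
    ext p
    simp only [coe_image, Set.mem_image, mem_coe, mem_offDiag, Prod.exists, uncurry_apply_pair,
      Set.mem_ofPred_eq]
    aesop
  rw [← Sym2.card_image_offDiag]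
  refine card_le_card_of_injOn φ (fun p hp => ?_) (hpairs ▸ hφ.1)
  obtain ⟨x, hx, y, hy, hxy, rfl⟩ := hpairs ▸ hp
  exact hE x hx y hy hxy

end BergeCliqueMap

theorem card_C5edges_lt (k : ℕ) {l : ℕ} (hl : 2 ≤ l) : #(C5edges k l) < l.choose 2 := by
  have h01 : s(0, 1) ∈ (range l).offDiag.image Sym2.mk.uncurry :=
    mem_image.2 ⟨(0, 1), by simp; omega, rfl⟩
  have hpairs : #{p ∈ range l ×ˢ range l | p.1 < p.2 ∧ ¬(p.1 = 0 ∧ p.2 = 1)}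
      ≤ l.choose 2 - 1 := by
    have hchoose := Sym2.card_image_offDiag (range l)
    rw [card_range] at hchoose
    rw [← hchoose, ← card_erase_of_mem h01]
    refine card_le_card_of_injOn (fun p => s(p.1, p.2)) (fun p hp => ?_) (fun p hp q hq h => ?_)
    · simp only [mem_coe, mem_filter, mem_product, mem_range] at hp
      simp only [mem_coe, mem_erase, mem_image, mem_offDiag, mem_range]
      refine ⟨?_, p, ⟨hp.1.1, hp.1.2, by omega⟩, rfl⟩
      rw [Ne, Sym2.eq_iff]
      omega
    · simp only [coe_filter, Set.mem_ofPred_eq] at hp hq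
      simp only [Sym2.eq_iff] at h
      ext <;> omega
  have := Nat.choose_pos (k := 2) hl
  exact card_image_le.trans_lt (by omega)

theorem card_Cedges_lt (k : ℕ) {l : ℕ} (hl : 4 ≤ l) : #(Cedges k l) < l.choose 2 := by
  unfold Cedges
  split_ifs with h4
  · subst h4
    exact card_image_le.trans_lt (by decide)
  · exact card_C5edges_lt k (by omega)

theorem Cedges_subset_Cverts {k l : ℕ} (hk : 3 ≤ k) (hl : 4 ≤ l) {e : Finset ℕ}
    (he : e ∈ Cedges k l) : e ⊆ Cverts k l := by
  intro x hx
  unfold Cedges at he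
  unfold Cverts
  split_ifs at he ⊢ with h4
  · obtain ⟨i, hi, rfl⟩ := mem_image.1 he
    simp only [mem_range, mem_union, mem_insert, mem_singleton, mem_Ico] at hi hx ⊢
    have := Nat.mod_lt (i + 1) (by norm_num : 0 < 5)
    have := Nat.mod_lt (i + 2) (by norm_num : 0 < 5)
    omega
  · obtain ⟨⟨i, j⟩, hij, rfl⟩ := mem_image.1 he
    simp only [mem_filter, mem_product, mem_range] at hij
    simp only [C5edge, mem_range, mem_union, mem_insert, mem_singleton, mem_Ico] at hx ⊢
    have : extraIdx i j ≤ 4 := by unfold extraIdx; split_ifs <;> omega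
    omega

section PendantExtension

variable {V : Type*} [DecidableEq V] {m a b : ℕ}

-- `S(n,k,ℓ)` is `pendantExtension (Cedges k ℓ) c v A B` with `m = ℓ - 2`.
def pendantExtension (C : Finset (Finset V)) (c : Fin m → V) (v : V)
    (A : Fin a → Finset V) (B : Fin b → Finset V) : Finset (Finset V) :=
  C ∪ Finset.image (fun p : Fin a × Fin m => A p.1 ∪ {c p.2}) Finset.univ
    ∪ Finset.image (fun p : Fin b × Fin m => B p.1 ∪ {v, c p.2}) Finset.univ

structure IsPendantExtension (W : Finset V) (C : Finset (Finset V)) (c : Fin m → V) (v : V)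
    (A : Fin a → Finset V) (B : Fin b → Finset V) : Prop where
  subset_of_mem : ∀ e ∈ C, e ⊆ W
  c_mem : ∀ j, c j ∈ W
  v_notMem : v ∉ W
  disjoint_A : ∀ i, Disjoint (A i) W
  disjoint_B : ∀ i, Disjoint (B i) W
  v_notMem_A : ∀ i, v ∉ A i
  v_notMem_B : ∀ i, v ∉ B i
  pairwise_disjoint_A : Pairwise (Disjoint on A)
  pairwise_disjoint_B : Pairwise (Disjoint on B)
  disjoint_A_B : ∀ i j, Disjoint (A i) (B j)

variable {W : Finset V} {C : Finset (Finset V)} {c : Fin m → V} {v : V}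
  {A : Fin a → Finset V} {B : Fin b → Finset V}

theorem mem_pendantExtension {e : Finset V} :
    e ∈ pendantExtension C c v A B ↔
      e ∈ C ∨ (∃ i j, A i ∪ {c j} = e) ∨ ∃ i j, B i ∪ {v, c j} = e := by
  simp [pendantExtension]

namespace IsPendantExtension

variable (hS : IsPendantExtension W C c v A B)
include hS

theorem cases_of_notMem {e : Finset V} {x : V} (he : e ∈ pendantExtension C c v A B)
    (hx : x ∈ e) (hxW : x ∉ W) :
    (∃ i j, A i ∪ {c j} = e ∧ x ∈ A i) ∨
      ∃ i j, B i ∪ {v, c j} = e ∧ (x ∈ B i ∨ x = v) := by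
  rcases mem_pendantExtension.1 he with he | ⟨i, j, rfl⟩ | ⟨i, j, rfl⟩
  · exact absurd (hS.subset_of_mem e he hx) hxW
  · refine .inl ⟨i, j, rfl, ?_⟩
    rcases mem_union.1 hx with hx | hx
    · exact hx
    · exact absurd (mem_singleton.1 hx ▸ hS.c_mem j) hxW
  · refine .inr ⟨i, j, rfl, ?_⟩
    simp only [mem_union, mem_insert, mem_singleton] at hx
    rcases hx with hx | hx | rfl
    exacts [.inl hx, .inr hx, absurd (hS.c_mem j) hxW]

theorem exists_eq_c_of_notMem {e : Finset V} (he : e ∈ pendantExtension C c v A B)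
    (heC : e ∉ C) : ∃ j, ∀ z ∈ e, z ∈ W → z = c j := by
  rcases mem_pendantExtension.1 he with hC | ⟨i, j, rfl⟩ | ⟨i, j, rfl⟩
  · exact absurd hC heC
  · refine ⟨j, fun z hz hzW => ?_⟩
    rcases mem_union.1 hz with hzA | hz
    · exact absurd hzW (disjoint_left.1 (hS.disjoint_A i) hzA)
    · exact mem_singleton.1 hz
  · refine ⟨j, fun z hz hzW => ?_⟩
    simp only [mem_union, mem_insert, mem_singleton] at hz
    rcases hz with hzB | rfl | rfl
    · exact absurd hzW (disjoint_left.1 (hS.disjoint_B i) hzB)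
    · exact absurd hzW hS.v_notMem
    · rfl

theorem degree_le_of_mem_A {x : V} {i : Fin a} (hx : x ∈ A i) :
    #{e ∈ pendantExtension C c v A B | x ∈ e} ≤ m :=
  calc #{e ∈ pendantExtension C c v A B | x ∈ e} ≤ #(univ.image fun j => A i ∪ {c j}) := by
        refine card_le_card fun e he => ?_
        obtain ⟨he, hxe⟩ := mem_filter.1 he
        rcases hS.cases_of_notMem he hxe (disjoint_left.1 (hS.disjoint_A i) hx) with
          ⟨i', j, rfl, hx'⟩ | ⟨i', j, rfl, hx' | rfl⟩
        · obtain rfl : i' = i :=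
            by_contra fun h => disjoint_left.1 (hS.pairwise_disjoint_A h) hx' hx
          exact mem_image_of_mem _ (mem_univ j)
        · exact absurd hx' (disjoint_left.1 (hS.disjoint_A_B i i') hx)
        · exact absurd hx (hS.v_notMem_A i)
    _ ≤ m := card_image_le.trans (by simp)

theorem degree_le_of_mem_B {x : V} {i : Fin b} (hx : x ∈ B i) :
    #{e ∈ pendantExtension C c v A B | x ∈ e} ≤ m :=
  calc #{e ∈ pendantExtension C c v A B | x ∈ e} ≤ #(univ.image fun j => B i ∪ {v, c j}) := by
        refine card_le_card fun e he => ?_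
        obtain ⟨he, hxe⟩ := mem_filter.1 he
        rcases hS.cases_of_notMem he hxe (disjoint_left.1 (hS.disjoint_B i) hx) with
          ⟨i', j, rfl, hx'⟩ | ⟨i', j, rfl, hx' | rfl⟩
        · exact absurd hx (disjoint_left.1 (hS.disjoint_A_B i' i) hx')
        · obtain rfl : i' = i :=
            by_contra fun h => disjoint_left.1 (hS.pairwise_disjoint_B h) hx' hx
          exact mem_image_of_mem _ (mem_univ j)
        · exact absurd hx (hS.v_notMem_B i)
    _ ≤ m := card_image_le.trans (by simp)

variable {core : Finset V} {φ : Sym2 V → Finset V}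
  (hφ : BergeCliqueMap (pendantExtension C c v A B) core φ) (hcore : m + 2 ≤ #core)
include hφ hcore

theorem notMem_A_of_mem_core {x : V} (hx : x ∈ core) (i : Fin a) : x ∉ A i := fun hxA => by
  have := hφ.card_sub_one_le_degree hx
  have := hS.degree_le_of_mem_A hxA
  omega

theorem notMem_B_of_mem_core {x : V} (hx : x ∈ core) (i : Fin b) : x ∉ B i := fun hxB => by
  have := hφ.card_sub_one_le_degree hx
  have := hS.degree_le_of_mem_B hxB
  omega

theorem v_notMem_core : v ∉ core := fun hv => by
  have hsub : core.erase v ⊆ univ.image c := fun y hy => by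
    obtain ⟨hyv, hy⟩ := mem_erase.1 hy
    obtain ⟨he, hve, hye⟩ := hφ.2 v hv y hy hyv.symm
    rcases hS.cases_of_notMem he hve hS.v_notMem with ⟨i, -, -, hvA⟩ | ⟨i, j, hBe, -⟩
    · exact absurd hvA (hS.v_notMem_A i)
    · simp only [← hBe, mem_union, mem_insert, mem_singleton] at hye
      rcases hye with hyB | rfl | rfl
      · exact absurd hyB (hS.notMem_B_of_mem_core hφ hcore hy i)
      · exact absurd rfl hyv
      · exact mem_image_of_mem c (mem_univ j)
  have hcard := (card_le_card hsub).trans (card_image_le (s := univ) (f := c))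
  rw [card_erase_of_mem hv, card_univ, Fintype.card_fin] at hcard
  omega

theorem core_subset : core ⊆ W := fun x hx => by
  by_contra hxW
  obtain ⟨y, hy, hyx⟩ := exists_mem_ne (by omega : 1 < #core) x
  obtain ⟨he, hxe, -⟩ := hφ.2 x hx y hy hyx.symm
  rcases hS.cases_of_notMem he hxe hxW with ⟨i, -, -, hxA⟩ | ⟨i, -, -, hxB | rfl⟩
  · exact hS.notMem_A_of_mem_core hφ hcore hx i hxA
  · exact hS.notMem_B_of_mem_core hφ hcore hx i hxB
  · exact hS.v_notMem_core hφ hcore hx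

theorem mem_of_mem_core {x y : V} (hx : x ∈ core) (hy : y ∈ core) (hxy : x ≠ y) :
    φ s(x, y) ∈ C := by
  obtain ⟨he, hxe, hye⟩ := hφ.2 x hx y hy hxy
  by_contra heC
  obtain ⟨j, hj⟩ := hS.exists_eq_c_of_notMem he heC
  have hW := hS.core_subset hφ hcore
  exact hxy ((hj x hxe (hW hx)).trans (hj y hye (hW hy)).symm)

omit hφ hcore

theorem not_hasBergeClique {l : ℕ} (hl : m + 2 ≤ l) (hC : #C < l.choose 2) :
    ¬ HasBergeClique l (pendantExtension C c v A B) := by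
  rintro ⟨core, rfl, φ, hφ⟩
  exact hC.not_ge <|
    hφ.choose_two_le_card fun x hx y hy hxy => hS.mem_of_mem_core hφ hl hx hy hxy

end IsPendantExtension

end PendantExtension

theorem stmt9_general (k l a b : ℕ) (hk : 3 ≤ k) (hl : 4 ≤ l)
    (c : Fin (l - 2) → ℕ) (hcV : ∀ j, c j ∈ Cverts k l)
    (v : ℕ) (hv : v ∉ Cverts k l)
    (A : Fin a → Finset ℕ) (B : Fin b → Finset ℕ)
    (hAV : ∀ i, Disjoint (A i) (Cverts k l)) (hBV : ∀ i, Disjoint (B i) (Cverts k l))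
    (hAv : ∀ i, v ∉ A i) (hBv : ∀ i, v ∉ B i)
    (hAA : ∀ i j, i ≠ j → Disjoint (A i) (A j))
    (hBB : ∀ i j, i ≠ j → Disjoint (B i) (B j))
    (hAB : ∀ i j, Disjoint (A i) (B j)) :
    ¬ HasBergeClique l
      (Cedges k l
        ∪ Finset.image (fun p : Fin a × Fin (l - 2) => A p.1 ∪ {c p.2}) Finset.univ
        ∪ Finset.image (fun p : Fin b × Fin (l - 2) => B p.1 ∪ {v, c p.2})
            Finset.univ) :=
  IsPendantExtension.not_hasBergeClique
    ⟨fun _ => Cedges_subset_Cverts hk hl, hcV, hv, hAV, hBV, hAv, hBv, hAA, hBB, hAB⟩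
    (by omega) (card_Cedges_lt k hl)

/-- the construction `S(n,k,ℓ)` (edges of `C(k,ℓ)` together with
`Aᵢ ∪ {cⱼ}` and `Bᵢ ∪ {v, cⱼ}`) contains no Berge-`K_ℓ`. -/
theorem stmt9 (k l a b : ℕ) (hk : 3 ≤ k) (hl : 4 ≤ l)
    (c : Fin (l - 2) → ℕ) (hc : Function.Injective c) (hcV : ∀ j, c j ∈ Cverts k l)
    (v : ℕ) (hv : v ∉ Cverts k l)
    (A : Fin a → Finset ℕ) (B : Fin b → Finset ℕ)
    (hA : ∀ i, (A i).card = k - 1) (hB : ∀ i, (B i).card = k - 2)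
    (hAV : ∀ i, Disjoint (A i) (Cverts k l)) (hBV : ∀ i, Disjoint (B i) (Cverts k l))
    (hAv : ∀ i, v ∉ A i) (hBv : ∀ i, v ∉ B i)
    (hAA : ∀ i j, i ≠ j → Disjoint (A i) (A j))
    (hBB : ∀ i j, i ≠ j → Disjoint (B i) (B j))
    (hAB : ∀ i j, Disjoint (A i) (B j)) :
    ¬ HasBergeClique l
      (Cedges k l
        ∪ Finset.image (fun p : Fin a × Fin (l - 2) => A p.1 ∪ {c p.2}) Finset.univ
        ∪ Finset.image (fun p : Fin b × Fin (l - 2) => B p.1 ∪ {v, c p.2})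
            Finset.univ) :=
  stmt9_general k l a b hk hl c hcV v hv A B hAV hBV hAv hBv hAA hBB hAB
end

section
/- For all k ≥ 2 and ℓ ≥ 3, sat_k(n, Berge-K_ℓ) ≥ (1 + o(1))·((ℓ−2)/(k−1))·n as n → ∞. That is, for every ε > 0 there exists N such that for all n ≥ N, every Berge-K_ℓ-saturated k-uniform hypergraph on n vertices has at least (1−ε)·((ℓ−2)/(k−1))·n hyperedges. -/
namespace BergeSaturation

open Finset

variable {V : Type*} [DecidableEq V] {H : Finset (Finset V)} {k l : ℕ}

def neighborFinset (H : Finset (Finset V)) (v : V) : Finset V :=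
  (H.filter (v ∈ ·)).biUnion (·.erase v)

lemma mem_neighborFinset {v z : V} :
    z ∈ neighborFinset H v ↔ ∃ h ∈ H, v ∈ h ∧ z ∈ h ∧ z ≠ v := by
  simp only [neighborFinset, mem_biUnion, mem_filter, mem_erase]
  grind

lemma card_neighborFinset_le (hU : ∀ h ∈ H, h.card = k) (v : V) :
    (neighborFinset H v).card ≤ (H.filter (v ∈ ·)).card * (k - 1) :=
  card_biUnion_le_card_mul _ _ _ fun h hh => by
    rw [mem_filter] at hh
    rw [card_erase_of_mem hh.2, hU h hh.1]

lemma sum_card_neighborFinset_le [Fintype V] (hU : ∀ h ∈ H, h.card = k) :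
    ∑ v, (neighborFinset H v).card ≤ k * (k - 1) * H.card :=
  calc ∑ v, (neighborFinset H v).card ≤ ∑ v, (H.filter (v ∈ ·)).card * (k - 1) :=
        sum_le_sum fun v _ => card_neighborFinset_le hU v
    _ = (∑ h ∈ H, (univ.filter (· ∈ h)).card) * (k - 1) := by
        rw [← sum_mul]
        exact congrArg (· * (k - 1)) (sum_card_bipartiteAbove_eq_sum_card_bipartiteBelow (· ∈ ·))
    _ = k * (k - 1) * H.card := by
        rw [sum_congr rfl fun h hh => show (univ.filter (· ∈ h)).card = k by simp [hU h hh],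
          sum_const, smul_eq_mul]
        ring

lemma card_mul_le_of_le_card_neighborFinset [Fintype V] (hU : ∀ h ∈ H, h.card = k) (d : ℕ) :
    d * (univ.filter fun v => d ≤ (neighborFinset H v).card).card ≤ k * (k - 1) * H.card :=
  calc d * (univ.filter fun v => d ≤ (neighborFinset H v).card).card
      ≤ ∑ v ∈ univ.filter fun v => d ≤ (neighborFinset H v).card, (neighborFinset H v).card := by
        rw [mul_comm, ← smul_eq_mul]
        exact card_nsmul_le_sum _ _ _ fun v hv => (mem_filter.mp hv).2
    _ ≤ ∑ v, (neighborFinset H v).card := sum_le_sum_of_subset (filter_subset _ _)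
    _ ≤ k * (k - 1) * H.card := sum_card_neighborFinset_le hU

def edgesMeeting (H : Finset (Finset V)) (v : V) (T : Finset V) : Finset (Finset V) :=
  H.filter fun h => v ∈ h ∧ (h ∩ T).Nonempty

lemma edgesMeeting_mono {v : V} {T T' : Finset V} (hT : T ⊆ T') :
    edgesMeeting H v T ⊆ edgesMeeting H v T' :=
  monotone_filter_right H fun _ _ ⟨hv, hmeet⟩ =>
    ⟨hv, hmeet.mono (inter_subset_inter le_rfl hT)⟩

/-- Double counting: an edge meeting `T` has at most `k - 1` vertices outside `T`. -/
lemma card_mul_le_of_le_card_edgesMeeting {a : ℕ} (hU : ∀ h ∈ H, h.card = k) {W T : Finset V}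
    (hWT : Disjoint W T) (hW : ∀ w ∈ W, a ≤ (edgesMeeting H w T).card) :
    W.card * a ≤ H.card * (k - 1) := by
  refine card_mul_le_card_mul (fun w h => w ∈ h ∧ (h ∩ T).Nonempty) hW fun h hh => ?_
  by_cases hT : (h ∩ T).Nonempty
  · obtain ⟨t, ht⟩ := hT
    rw [mem_inter] at ht
    calc (W.bipartiteBelow _ h).card ≤ (h.erase t).card := card_le_card fun w hw => by
          rw [mem_bipartiteBelow] at hw
          exact mem_erase.mpr ⟨fun hwt => disjoint_left.mp hWT hw.1 (hwt ▸ ht.2), hw.2.1⟩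
      _ = k - 1 := by rw [card_erase_of_mem ht.1, hU h hh]
  · simp [bipartiteBelow, hT]

def Blocks (H : Finset (Finset V)) (a : ℕ) (x y : V) : Prop :=
  a ≤ (edgesMeeting H x (neighborFinset H y)).card

lemma hasBergeCliqueUsing_of_insert {e : Finset V} (hfree : ¬ HasBergeClique l H)
    (hins : HasBergeClique l (insert e H)) : HasBergeCliqueUsing l (insert e H) e := by
  obtain ⟨core, hcard, φ, hinj, hedge⟩ := hins
  refine ⟨core, hcard, φ, ⟨hinj, hedge⟩, ?_⟩
  by_contra! hne
  refine hfree ⟨core, hcard, φ, hinj, fun x hx y hy hxy => ?_⟩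
  obtain ⟨hmem, hxφ, hyφ⟩ := hedge x hx y hy hxy
  exact ⟨(mem_insert.mp hmem).resolve_left (hne x hx y hy hxy), hxφ, hyφ⟩

namespace BergeCliqueMap

variable {e core : Finset V} {φ : Sym2 V → Finset V} {x y : V}

lemma apply_mem_of_ne (hφ : BergeCliqueMap (insert e H) core φ) (hx : x ∈ core) (hy : y ∈ core)
    (hxy : x ≠ y) (he : φ s(x, y) = e) {a b : V} (ha : a ∈ core) (hb : b ∈ core) (hab : a ≠ b)
    (hne : s(a, b) ≠ s(x, y)) : φ s(a, b) ∈ H :=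
  (mem_insert.mp (hφ.2 a ha b hb hab).1).resolve_left fun h =>
    hne (hφ.1 ⟨a, ha, b, hb, hab, rfl⟩ ⟨x, hx, y, hy, hxy, rfl⟩ (h.trans he.symm))

lemma blocks (hφ : BergeCliqueMap (insert e H) core φ) (hx : x ∈ core) (hy : y ∈ core)
    (hxy : x ≠ y) (he : φ s(x, y) = e) : Blocks H (core.card - 2) x y := by
  have hrest : ∀ z ∈ core \ {x, y}, z ∈ core ∧ z ≠ x ∧ z ≠ y := by
    intro z hz
    simp only [mem_sdiff, mem_insert, mem_singleton, not_or] at hz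
    exact ⟨hz.1, hz.2⟩
  have hcard : (core \ {x, y}).card = core.card - 2 := by
    rw [card_sdiff_of_subset (insert_subset hx (singleton_subset_iff.mpr hy)), card_pair hxy]
  calc core.card - 2 = ((core \ {x, y}).image fun z => φ s(x, z)).card := by
        rw [card_image_of_injOn, hcard]
        intro z₁ hz₁ z₂ hz₂ heq
        obtain ⟨hz₁c, hz₁x, -⟩ := hrest z₁ hz₁
        obtain ⟨hz₂c, hz₂x, -⟩ := hrest z₂ hz₂
        exact Sym2.congr_right.mp
          (hφ.1 ⟨x, hx, z₁, hz₁c, hz₁x.symm, rfl⟩ ⟨x, hx, z₂, hz₂c, hz₂x.symm, rfl⟩ heq)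
    _ ≤ (edgesMeeting H x (neighborFinset H y)).card := by
        refine card_le_card fun h hh => ?_
        obtain ⟨z, hz, rfl⟩ := mem_image.mp hh
        obtain ⟨hzc, hzx, hzy⟩ := hrest z hz
        obtain ⟨-, hxφ, hzφ⟩ := hφ.2 x hx z hzc hzx.symm
        obtain ⟨-, hyφ', hzφ'⟩ := hφ.2 y hy z hzc hzy.symm
        have hxz_mem := apply_mem_of_ne hφ hx hy hxy he hx hzc hzx.symm (by simp [hzy, hxy])
        have hyz_mem := apply_mem_of_ne hφ hx hy hxy he hy hzc hzy.symm (by simp [hxy.symm, hzx])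
        exact mem_filter.mpr ⟨hxz_mem, hxφ, z, mem_inter.mpr
          ⟨hzφ, mem_neighborFinset.mpr ⟨_, hyz_mem, hyφ', hzφ', hzy⟩⟩⟩

end BergeCliqueMap

lemma exists_blocks_of_hasBergeCliqueUsing {e : Finset V}
    (h : HasBergeCliqueUsing l (insert e H) e) :
    ∃ x ∈ e, ∃ y ∈ e, x ≠ y ∧ Blocks H (l - 2) x y ∧ Blocks H (l - 2) y x := by
  obtain ⟨core, rfl, φ, hφ, x, hx, y, hy, hxy, he⟩ := h
  obtain ⟨-, hxe, hye⟩ := hφ.2 x hx y hy hxy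
  rw [he] at hxe hye
  exact ⟨x, hxe, y, hye, hxy, BergeCliqueMap.blocks hφ hx hy hxy he,
    BergeCliqueMap.blocks hφ hy hx hxy.symm (by rwa [Sym2.eq_swap])⟩

lemma exists_small_blocked_set (hk : 2 ≤ k) (hfree : ¬ HasBergeClique l H)
    (hsat : ∀ e : Finset V, e.card = k → e ∉ H → HasBergeClique l (insert e H))
    (L : Finset V) :
    ∃ S ⊆ L, S.card ≤ k - 1 ∧ ∀ w ∈ L, w ∉ S.biUnion (fun u => insert u (neighborFinset H u)) →
      ∃ u ∈ S, Blocks H (l - 2) w u := by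
  classical
  let R : V → V → Prop := fun x y => ¬ (Blocks H (l - 2) x y ∧ Blocks H (l - 2) y x)
  let C := L.powerset.filter fun S : Finset V => S.card ≤ k - 1 ∧ (S : Set V).Pairwise R
  obtain ⟨S, hSC, hmax⟩ := C.exists_max_image card ⟨∅, by simp [C]⟩
  simp only [C, mem_filter, mem_powerset] at hSC hmax
  obtain ⟨hSL, hSk, hSR⟩ := hSC
  refine ⟨S, hSL, hSk, fun w hwL hwT => ?_⟩
  have hwS : w ∉ S := fun h => hwT (mem_biUnion.mpr ⟨w, h, mem_insert_self _ _⟩)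
  have hnot : ¬ (↑(insert w S) : Set V).Pairwise R := by
    intro hP
    rcases hSk.lt_or_eq with hlt | heq
    · have := hmax (insert w S) ⟨insert_subset hwL hSL, by
        rw [card_insert_of_notMem hwS]; omega, hP⟩
      rw [card_insert_of_notMem hwS] at this
      omega
    · obtain ⟨u, hu⟩ : S.Nonempty := card_pos.mp (by omega)
      have hnew : insert w S ∉ H := fun he => hwT <| mem_biUnion.mpr ⟨u, hu,
        mem_insert_of_mem <| mem_neighborFinset.mpr ⟨_, he, mem_insert_of_mem hu,
          mem_insert_self _ _, fun h => hwS (h ▸ hu)⟩⟩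
      obtain ⟨x, hx, y, hy, hxy, hb⟩ := exists_blocks_of_hasBergeCliqueUsing <|
        hasBergeCliqueUsing_of_insert hfree
          (hsat _ (by rw [card_insert_of_notMem hwS]; omega) hnew)
      exact hP (mem_coe.mpr hx) (mem_coe.mpr hy) hxy hb
  rw [coe_insert, Set.pairwise_insert] at hnot
  obtain ⟨u, hu, -, h⟩ : ∃ u ∈ S, w ≠ u ∧ ¬ (R w u ∧ R u w) := by simpa [hSR] using hnot
  exact ⟨u, hu, by tauto⟩

lemma card_mul_le_of_saturated [Fintype V] (hk : 2 ≤ k) (hU : ∀ h ∈ H, h.card = k)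
    (hfree : ¬ HasBergeClique l H)
    (hsat : ∀ e : Finset V, e.card = k → e ∉ H → HasBergeClique l (insert e H)) (d : ℕ) :
    (l - 2) * Fintype.card V ≤ (k - 1) * H.card + (l - 2) * ((k - 1) * d) +
      (l - 2) * (univ.filter fun v => d ≤ (neighborFinset H v).card).card := by
  set High := univ.filter fun v => d ≤ (neighborFinset H v).card
  set Low := univ.filter fun v => (neighborFinset H v).card < d
  obtain ⟨S, hSL, hSk, hS⟩ := exists_small_blocked_set hk hfree hsat Low
  set T := S.biUnion fun u => insert u (neighborFinset H u)
  have hT : T.card ≤ (k - 1) * d :=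
    (card_biUnion_le_card_mul _ _ _ fun u hu =>
      (card_insert_le _ _).trans (mem_filter.mp (hSL hu)).2).trans (Nat.mul_le_mul_right d hSk)
  have hW : (Low \ T).card * (l - 2) ≤ H.card * (k - 1) := by
    refine card_mul_le_of_le_card_edgesMeeting hU sdiff_disjoint fun w hw => ?_
    obtain ⟨hwL, hwT⟩ := mem_sdiff.mp hw
    obtain ⟨u, hu, hblock⟩ := hS w hwL hwT
    exact hblock.trans <| card_le_card <| edgesMeeting_mono <|
      (subset_insert u _).trans (subset_biUnion_of_mem (fun u => insert u (neighborFinset H u)) hu)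
  have hcover : Fintype.card V ≤ (Low \ T).card + T.card + High.card :=
    calc Fintype.card V ≤ ((Low \ T) ∪ T ∪ High).card := by
          rw [← card_univ]
          refine card_le_card fun v _ => ?_
          by_cases hv : (neighborFinset H v).card < d <;> simp [Low, High, hv, le_of_not_gt]
      _ ≤ _ := (card_union_le _ _).trans (add_le_add_left (card_union_le _ _) _)
  nlinarith

/-- Here `a = ℓ - 2`, `b = k - 1`, `m = |H|`, and `h` counts the vertices whose neighbourhood has
at least `d` elements. -/
lemma one_sub_mul_div_mul_le {a b d k n m h ε : ℝ} (ha : 0 ≤ a) (hb : 0 < b) (hd : 0 < d)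
    (hk : 0 ≤ k) (hn : 0 ≤ n) (hε : 0 ≤ ε) (hkd : k * a ≤ ε * d / 2) (hnd : 2 * b * d ≤ ε * n)
    (hcount : a * n ≤ b * m + a * (b * d) + a * h) (hhigh : d * h ≤ k * (b * m)) :
    (1 - ε) * (a / b) * n ≤ m := by
  have hka : 0 ≤ k * a := mul_nonneg hk ha
  have han : 0 ≤ a * n := mul_nonneg ha hn
  have hmul : (1 - ε) * a * n * (d + k * a) ≤ b * m * (d + k * a) := by
    nlinarith [mul_le_mul_of_nonneg_left hkd han, mul_nonneg (mul_nonneg hε han) hka,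
      mul_le_mul_of_nonneg_left hnd (mul_nonneg ha hd.le),
      mul_le_mul_of_nonneg_left hcount hd.le, mul_le_mul_of_nonneg_left hhigh ha]
  rw [mul_div_assoc', div_mul_eq_mul_div, div_le_iff₀ hb, mul_comm m]
  exact le_of_mul_le_mul_right hmul (by linarith)

end BergeSaturation

/-- `sat_k(n, Berge-K_ℓ) ≥ (1+o(1))·((ℓ−2)/(k−1))·n`: for every `ε > 0`
there is `N` such that for all `n ≥ N`, every Berge-`K_ℓ`-saturated `k`-uniform
hypergraph on `n` vertices has at least `(1−ε)·((ℓ−2)/(k−1))·n` hyperedges. -/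
theorem stmt12 (k l : ℕ) (hk : 2 ≤ k) (hl : 3 ≤ l) (ε : ℝ) (hε : 0 < ε) :
    ∃ N : ℕ, ∀ n : ℕ, N ≤ n → ∀ H : Finset (Finset (Fin n)),
      (∀ e ∈ H, e.card = k) →
      ¬ HasBergeClique l H →
      (∀ e : Finset (Fin n), e.card = k → e ∉ H →
        HasBergeClique l (insert e H)) →
      (1 - ε) * (((l : ℝ) - 2) / ((k : ℝ) - 1)) * n ≤ (H.card : ℝ) := by
  have hkR : (2 : ℝ) ≤ k := by exact_mod_cast hk
  have hlR : (3 : ℝ) ≤ l := by exact_mod_cast hl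
  obtain ⟨d, hd, hkd⟩ : ∃ d : ℕ, (0 : ℝ) < d ∧ (k : ℝ) * ((l : ℝ) - 2) ≤ ε * d / 2 := by
    refine ⟨⌈2 * k * ((l : ℝ) - 2) / ε⌉₊ + 1, by positivity, ?_⟩
    have := Nat.le_ceil (2 * k * ((l : ℝ) - 2) / ε)
    rw [div_le_iff₀ hε] at this
    push_cast
    nlinarith
  refine ⟨⌈2 * ((k : ℝ) - 1) * d / ε⌉₊, fun n hn H hU hfree hsat => ?_⟩
  have hnd : 2 * ((k : ℝ) - 1) * d ≤ ε * n := by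
    rw [mul_comm ε, ← div_le_iff₀ hε]
    exact (Nat.le_ceil _).trans (by exact_mod_cast hn)
  have hcount := BergeSaturation.card_mul_le_of_saturated hk hU hfree hsat d
  have hhigh := BergeSaturation.card_mul_le_of_le_card_neighborFinset hU d
  rw [Fintype.card_fin] at hcount
  have hcountR := (Nat.cast_le (α := ℝ)).mpr hcount
  have hhighR := (Nat.cast_le (α := ℝ)).mpr hhigh
  push_cast [Nat.cast_sub (by omega : 2 ≤ l), Nat.cast_sub (by omega : 1 ≤ k)] at hcountR hhighR
  exact BergeSaturation.one_sub_mul_div_mul_le (by linarith) (by linarith) hd (by linarith)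
    n.cast_nonneg hε.le hkd hnd hcountR (by linarith)
end

section
/- Let F be a graph with independence number α(F) and minimum degree δ(F), with |V(F)| ≥ α(F) + 2, and set ν = |V(F)| − α(F) − 1. Fix k > ν and n ≥ 10k|V(F)|³, and let a, t ≥ 0 satisfy a(k − ν + 1) + t = n − ν with 0 ≤ t < k − ν + 1. Let H(n,k,F) be the k-uniform hypergraph with vertex set V₁ ∪ A₁ ∪ ... ∪ A_a ∪ T (disjoint, |V₁| = ν, each |A_i| = k − ν + 1, |T| = t, V₁ = {v₁,...,v_ν}) and hyperedges (V₁ ∪ A_i) \ {v_j} for i ∈ [a], j ∈ [ν]. If δ(F) > (|V(F)| − α(F))/2, then H(n,k,F) contains no Berge-F. -/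
/-!
Vertices of `F` embedded outside `V₁ = {0, …, ν - 1}` form an independent set. Indeed, if two
adjacent such vertices `x, y` were embedded, the hyperedge of `xy` would put both into the same
part `Aᵢ`. Every hyperedge meeting `Aᵢ` is one of the `ν` sets `(V₁ ∪ Aᵢ) \ {vⱼ}`, so the at least
`2δ(F) - 1 ≥ ν + 1` edges of `F` at `x` or `y` would need distinct hyperedges among only `ν`.
Hence at most `α(F)` vertices lie outside `V₁`, and at least `|V(F)| - ν = α(F) + 1` must.
-/

/-- A hypergraph `H` (a finite set of hyperedges) contains a Berge-`F`: an injective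
embedding `ψ` of the vertices of `F` together with an injective assignment `φ` of
hyperedges of `H` to the edges of `F`, each edge contained in its assigned hyperedge. -/
def HasBerge {α V : Type*} (F : SimpleGraph α) (H : Finset (Finset V)) : Prop :=
  ∃ ψ : α → V, Function.Injective ψ ∧
    ∃ φ : Sym2 α → Finset V, Set.InjOn φ F.edgeSet ∧
      ∀ e ∈ F.edgeSet, φ e ∈ H ∧ ∀ x ∈ e, ψ x ∈ φ e

/-- The independence number of a graph. -/
noncomputable def indepNum {α : Type*} [Fintype α] (F : SimpleGraph α) : ℕ :=
  sSup {m : ℕ | ∃ s : Finset α,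
    (∀ x ∈ s, ∀ y ∈ s, x ≠ y → ¬ F.Adj x y) ∧ s.card = m}

open Finset

lemma card_le_indepNum {α : Type*} [Fintype α] (F : SimpleGraph α) (s : Finset α)
    (hs : ∀ x ∈ s, ∀ y ∈ s, x ≠ y → ¬ F.Adj x y) : #s ≤ indepNum F :=
  le_csSup ⟨Fintype.card α, fun _ ⟨u, _, hu⟩ => hu ▸ u.card_le_univ⟩ ⟨s, hs, rfl⟩

namespace SimpleGraph

variable {α : Type*} [Fintype α] [DecidableEq α] (G : SimpleGraph α) [DecidableRel G.Adj]

lemma two_mul_minDegree_le_card_incidenceFinset_union {x y : α} (hxy : x ≠ y) :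
    2 * G.minDegree ≤ #(G.incidenceFinset x ∪ G.incidenceFinset y) + 1 := by
  have hinter : #(G.incidenceFinset x ∩ G.incidenceFinset y) ≤ 1 := by
    refine (card_le_card fun e he => ?_).trans (card_singleton s(x, y)).le
    simp only [mem_inter, mem_incidenceFinset] at he
    exact mem_singleton.2 (G.incidenceSet_inter_incidenceSet_subset hxy he)
  have := card_union_add_card_inter (G.incidenceFinset x) (G.incidenceFinset y)
  simp only [card_incidenceFinset_eq_degree] at this
  linarith [G.minDegree_le_degree x, G.minDegree_le_degree y]

/-- The edges at `x` or `y` are sent injectively into `S`. -/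
lemma two_mul_minDegree_le_of_berge {V : Type*} {H S : Finset (Finset V)} {ψ : α → V}
    {φ : Sym2 α → Finset V} (hφinj : Set.InjOn φ G.edgeSet)
    (hφ : ∀ e ∈ G.edgeSet, φ e ∈ H ∧ ∀ x ∈ e, ψ x ∈ φ e) {x y : α} (hxy : x ≠ y)
    (hS : ∀ h ∈ H, ψ x ∈ h ∨ ψ y ∈ h → h ∈ S) :
    2 * G.minDegree ≤ #S + 1 := by
  have hedge : ∀ e ∈ G.incidenceFinset x ∪ G.incidenceFinset y, e ∈ G.edgeSet := by
    intro e he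
    rcases mem_union.1 he with h | h <;> exact ((G.mem_incidenceFinset _ _).1 h).1
  have hcard : #(G.incidenceFinset x ∪ G.incidenceFinset y) ≤ #S := by
    refine card_le_card_of_injOn φ (fun e he => hS _ (hφ e (hedge e he)).1 ?_)
      (fun e he e' he' => hφinj (hedge e he) (hedge e' he'))
    rcases mem_union.1 he with h | h
    · exact .inl ((hφ e (hedge e he)).2 x ((G.mem_incidenceFinset _ _).1 h).2)
    · exact .inr ((hφ e (hedge e he)).2 y ((G.mem_incidenceFinset _ _).1 h).2)
  linarith [G.two_mul_minDegree_le_card_incidenceFinset_union hxy]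

end SimpleGraph

section Construction

variable {ι : Type*} (A : ι → Finset ℕ) (ν : ℕ)

def constructionHypergraph.star (i : ι) : Finset (Finset ℕ) :=
  image (fun j : Fin ν => (range ν ∪ A i) \ {(j : ℕ)}) univ

/-- The hypergraph `H(n,k,F)` with `V₁ = range ν`; the vertices of `T` lie in no hyperedge. -/
def constructionHypergraph [Fintype ι] : Finset (Finset ℕ) :=
  image (fun p : ι × Fin ν => (range ν ∪ A p.1) \ {(p.2 : ℕ)}) univ

namespace constructionHypergraph

lemma card_star_le (i : ι) : #(star A ν i) ≤ ν :=
  card_image_le.trans (by simp)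

variable {A ν}

lemma mem_of_mem_star {i : ι} {s : Finset ℕ} {v : ℕ} (hs : s ∈ star A ν i) (hv : v ∈ s)
    (hvν : v ∉ range ν) : v ∈ A i := by
  obtain ⟨j, -, rfl⟩ := mem_image.1 hs
  simpa [hvν] using (mem_sdiff.1 hv).1

variable [Fintype ι]

lemma exists_mem_star {s : Finset ℕ} (hs : s ∈ constructionHypergraph A ν) :
    ∃ i, s ∈ star A ν i := by
  obtain ⟨⟨i, j⟩, -, rfl⟩ := mem_image.1 hs
  exact ⟨i, mem_image_of_mem _ (mem_univ j)⟩

lemma mem_star_of_mem (hAV : ∀ i, Disjoint (A i) (range ν))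
    (hAA : ∀ i j, i ≠ j → Disjoint (A i) (A j)) {i : ι} {s : Finset ℕ} {v : ℕ}
    (hvA : v ∈ A i) (hs : s ∈ constructionHypergraph A ν) (hv : v ∈ s) :
    s ∈ star A ν i := by
  obtain ⟨i', hs'⟩ := exists_mem_star hs
  obtain rfl : i = i' := by
    by_contra hne
    exact disjoint_left.1 (hAA i i' hne) hvA
      (mem_of_mem_star hs' hv (disjoint_left.1 (hAV i) hvA))
  exact hs'

lemma not_adj_of_berge {α : Type*} [Fintype α] [DecidableEq α]
    {F : SimpleGraph α} [DecidableRel F.Adj] (hAV : ∀ i, Disjoint (A i) (range ν))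
    (hAA : ∀ i j, i ≠ j → Disjoint (A i) (A j)) (hδ : ν + 2 ≤ 2 * F.minDegree)
    {ψ : α → ℕ} {φ : Sym2 α → Finset ℕ} (hφinj : Set.InjOn φ F.edgeSet)
    (hφ : ∀ e ∈ F.edgeSet, φ e ∈ constructionHypergraph A ν ∧ ∀ x ∈ e, ψ x ∈ φ e)
    {x y : α} (hx : ψ x ∉ range ν) (hy : ψ y ∉ range ν) : ¬ F.Adj x y := by
  intro hadj
  obtain ⟨hφxy, hψxy⟩ := hφ s(x, y) hadj
  obtain ⟨i, hstar⟩ := exists_mem_star hφxy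
  have hxA := mem_of_mem_star hstar (hψxy x (Sym2.mem_mk_left x y)) hx
  have hyA := mem_of_mem_star hstar (hψxy y (Sym2.mem_mk_right x y)) hy
  have hS : ∀ s ∈ constructionHypergraph A ν, ψ x ∈ s ∨ ψ y ∈ s → s ∈ star A ν i := by
    rintro s hs (h | h)
    · exact mem_star_of_mem hAV hAA hxA hs h
    · exact mem_star_of_mem hAV hAA hyA hs h
  have := F.two_mul_minDegree_le_of_berge hφinj hφ hadj.ne hS
  linarith [card_star_le A ν i]

end constructionHypergraph

end Construction

theorem stmt14_general {α : Type*} [Fintype α] [DecidableEq α]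
    (F : SimpleGraph α) [DecidableRel F.Adj]
    (a ν : ℕ)
    (hν : ν = Fintype.card α - indepNum F - 1)
    (hcard : indepNum F + 2 ≤ Fintype.card α)
    (A : Fin a → Finset ℕ)
    (hAV : ∀ i, Disjoint (A i) (Finset.range ν))
    (hAA : ∀ i j, i ≠ j → Disjoint (A i) (A j))
    (hδ : ((Fintype.card α : ℝ) - (indepNum F : ℝ)) / 2 < (F.minDegree : ℝ)) :
    ¬ HasBerge F
      (Finset.image
        (fun p : Fin a × Fin ν => (Finset.range ν ∪ A p.1) \ {(p.2 : ℕ)})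
        Finset.univ) := by
  rintro ⟨ψ, hψ, φ, hφinj, hφ⟩
  have hνα : (ν : ℝ) + 1 = Fintype.card α - indepNum F := by
    rw [hν, Nat.cast_sub (by omega), Nat.cast_sub (by omega)]; push_cast; ring
  have hδν : ν + 2 ≤ 2 * F.minDegree := by
    have : (ν : ℝ) + 1 < 2 * F.minDegree := by linarith
    exact_mod_cast this
  set W := univ.filter fun x => ψ x ∉ range ν
  have hW : #W ≤ indepNum F := card_le_indepNum F W fun x hx y hy _ =>
    constructionHypergraph.not_adj_of_berge hAV hAA hδν hφinj hφ
      (mem_filter.1 hx).2 (mem_filter.1 hy).2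
  have hWc : #Wᶜ ≤ ν := by
    simpa using card_le_card_of_injOn ψ (t := range ν) (fun x hx => by simpa [W] using hx)
      hψ.injOn
  have := card_add_card_compl W
  omega

/-- with `ν = |V(F)| − α(F) − 1 < k`, the hypergraph `H(n,k,F)` with
vertex set `V₁ ∪ A₁ ∪ ... ∪ A_a ∪ T` (`V₁ = {0,...,ν−1}`, `|Aᵢ| = k−ν+1` pairwise
disjoint) and hyperedges `(V₁ ∪ Aᵢ) \ {vⱼ}` contains no Berge-`F`, provided
`δ(F) > (|V(F)| − α(F))/2`. -/
theorem stmt14 {α : Type*} [Fintype α] [DecidableEq α]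
    (F : SimpleGraph α) [DecidableRel F.Adj] [Nonempty α]
    (k n a t ν : ℕ)
    (hν : ν = Fintype.card α - indepNum F - 1)
    (hcard : indepNum F + 2 ≤ Fintype.card α)
    (hk : ν < k) (hn : 10 * k * (Fintype.card α) ^ 3 ≤ n)
    (hat : a * (k - ν + 1) + t = n - ν) (ht : t < k - ν + 1)
    (A : Fin a → Finset ℕ)
    (hA : ∀ i, (A i).card = k - ν + 1)
    (hAV : ∀ i, Disjoint (A i) (Finset.range ν))
    (hAA : ∀ i j, i ≠ j → Disjoint (A i) (A j))
    (hδ : ((Fintype.card α : ℝ) - (indepNum F : ℝ)) / 2 < (F.minDegree : ℝ)) :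
    ¬ HasBerge F
      (Finset.image
        (fun p : Fin a × Fin ν => (Finset.range ν ∪ A p.1) \ {(p.2 : ℕ)})
        Finset.univ) :=
  stmt14_general F a ν hν hcard A hAV hAA hδ
end

section
/- Let G be a graph containing a cycle, with girth g and vertex feedback number f satisfying f < g and f ≤ k. Let H = H_k(n, k−f+1, G, S) be the hypergraph of Construction: V = V₁ ∪ V₂ ∪ V₃ with |V₁| = f; edges between V₁ and V₂ forming a Berge-G[S] with core vertices in V₁ (one k-edge per edge of G[S], pairwise disjoint outside V₁); and for each a-set A in a partition M of a subset V₃' ⊆ V₃ into sets of size a = k−f+1, all binom(f, f−1) = f hyperedges containing A and k−a = f−1 vertices of V₁. Then H contains no Berge-G. -/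
/-- The vertex feedback number of a graph: the least size of a set of vertices whose
deletion leaves an acyclic graph. -/
noncomputable def feedbackNum {α : Type*} [Fintype α] (F : SimpleGraph α) : ℕ :=
  sInf {m : ℕ | ∃ s : Finset α, s.card = m ∧
    (F.induce ((↑s : Set α)ᶜ)).IsAcyclic}

open Finset

namespace SimpleGraph

variable {α : Type*} {G : SimpleGraph α}

theorem exists_isCycle_forall_notMem_of_not_isAcyclic_induce {s : Set α}
    (h : ¬ (G.induce sᶜ).IsAcyclic) :
    ∃ (v : α) (c : G.Walk v v), c.IsCycle ∧ ∀ y ∈ c.support, y ∉ s := by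
  simp only [IsAcyclic, not_forall, not_not] at h
  obtain ⟨v, c, hc⟩ := h
  refine ⟨_, c.map (Embedding.induce _).toHom, hc.map Subtype.val_injective, ?_⟩
  intro y hy
  rw [Walk.support_map, List.mem_map] at hy
  obtain ⟨⟨y', hy'⟩, -, rfl⟩ := hy
  exact hy'

section Feedback

variable [Fintype α]

theorem feedbackNum_le_card {s : Finset α} (hs : (G.induce (↑s : Set α)ᶜ).IsAcyclic) :
    feedbackNum G ≤ #s :=
  Nat.sInf_le ⟨s, rfl, hs⟩

theorem feedbackNum_lt_card_of_forall_isCycle (hG : ¬ G.IsAcyclic) {T : Finset α}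
    (hT : ∀ (x : α) (c : G.Walk x x), c.IsCycle → ∃ y ∈ c.support, y ∈ T ∧ y ≠ x) :
    feedbackNum G < #T := by
  classical
  obtain ⟨v, c, hc⟩ : ∃ (v : α) (c : G.Walk v v), c.IsCycle := by
    simpa [IsAcyclic] using hG
  obtain ⟨x, -, hxT, -⟩ := hT v c hc
  suffices hfeed : (G.induce (↑(T.erase x) : Set α)ᶜ).IsAcyclic by
    have := feedbackNum_le_card hfeed
    rw [card_erase_of_mem hxT] at this
    have := card_pos.2 ⟨x, hxT⟩
    omega
  by_contra hcyc
  obtain ⟨u, d, hd, hdT⟩ := exists_isCycle_forall_notMem_of_not_isAcyclic_induce hcyc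
  obtain ⟨y, hy, hyT, hyx⟩ : ∃ y ∈ d.support, y ∈ T ∧ y ≠ x := by
    by_cases hx : x ∈ d.support
    · obtain ⟨y, hy, hyT, hyx⟩ := hT x _ (hd.rotate hx)
      exact ⟨y, (d.mem_support_rotate_iff x hx).1 hy, hyT, hyx⟩
    · obtain ⟨y, hy, hyT, -⟩ := hT u d hd
      exact ⟨y, hy, hyT, fun h => hx (h ▸ hy)⟩
  exact hdT y hy (by simpa [hyx] using hyT)

end Feedback

end SimpleGraph

open SimpleGraph

structure BergeCopy {α V : Type*} (F : SimpleGraph α) (H : Finset (Finset V)) where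
  vert : α → V
  injective_vert : Function.Injective vert
  edge : Sym2 α → Finset V
  injOn_edge : Set.InjOn edge F.edgeSet
  edge_mem : ∀ e ∈ F.edgeSet, edge e ∈ H
  vert_mem_edge : ∀ e ∈ F.edgeSet, ∀ x ∈ e, vert x ∈ edge e

namespace BergeCopy

variable {α V : Type*} [DecidableEq V] {G : SimpleGraph α} {H : Finset (Finset V)}
  (B : BergeCopy G H) {U V₁ : Finset V}

theorem vert_mem_or_mem_of_adj (hU : ∀ e ∈ H, ¬ Disjoint e U → e ⊆ U ∪ V₁) {u v : α}
    (huv : G.Adj u v) (hu : B.vert u ∈ U) : B.vert v ∈ U ∨ B.vert v ∈ V₁ := by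
  have he : s(u, v) ∈ G.edgeSet := huv
  have hmeet : ¬ Disjoint (B.edge s(u, v)) U :=
    not_disjoint_iff.2 ⟨_, B.vert_mem_edge _ he u (Sym2.mem_mk_left u v), hu⟩
  simpa using hU _ (B.edge_mem _ he) hmeet (B.vert_mem_edge _ he v (Sym2.mem_mk_right u v))

theorem vert_mem_of_isPath (hU : ∀ e ∈ H, ¬ Disjoint e U → e ⊆ U ∪ V₁) {u y : α}
    {p : G.Walk u y} (hp : p.IsPath) (hV₁ : ∀ z ∈ p.support, B.vert z ∈ V₁ → z = y)
    (hu : B.vert u ∈ U) : ∀ z ∈ p.support, z = y ∨ B.vert z ∈ U := by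
  induction p with
  | nil => simp
  | @cons u w y h r ih =>
    rw [Walk.cons_isPath_iff] at hp
    simp only [Walk.support_cons, List.mem_cons, forall_eq_or_imp] at hV₁ ⊢
    refine ⟨Or.inr hu, ?_⟩
    rcases B.vert_mem_or_mem_of_adj hU h hu with hw | hw
    · exact ih hp.1 hV₁.2 hw
    · obtain rfl := hV₁.2 _ r.start_mem_support hw
      cases Walk.isPath_iff_nil.1 hp.1
      simp

theorem length_le_card_filter_not_disjoint (hU : ∀ e ∈ H, ¬ Disjoint e U → e ⊆ U ∪ V₁)
    {x w : α} (h : G.Adj x w) (q : G.Walk w x) (hc : (Walk.cons h q).IsCycle)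
    (hV₁ : ∀ z ∈ (Walk.cons h q).support, B.vert z ∈ V₁ → z = x) (hw : B.vert w ∈ U) :
    (Walk.cons h q).length ≤ #{e ∈ H | ¬ Disjoint e U} := by
  classical
  set c := Walk.cons h q
  have hsupp : ∀ z ∈ c.support, z = x ∨ B.vert z ∈ U := by
    simp only [c, Walk.support_cons, List.mem_cons, forall_eq_or_imp]
    exact ⟨by simp, B.vert_mem_of_isPath hU ((Walk.cons_isCycle_iff q h).1 hc).1
      (fun z hz => hV₁ z (by simp [c, hz])) hw⟩
  have hmaps : ∀ e ∈ c.edges, B.edge e ∈ {e ∈ H | ¬ Disjoint e U} := by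
    intro e he
    induction e using Sym2.ind with | _ a b =>
    have hab := c.edges_subset_edgeSet he
    obtain ⟨z, hz, hzU⟩ : ∃ z ∈ s(a, b), B.vert z ∈ U := by
      rcases hsupp a (c.fst_mem_support_of_mem_edges he) with rfl | ha
      · rcases hsupp b (c.snd_mem_support_of_mem_edges he) with rfl | hb
        · exact absurd rfl (G.ne_of_adj hab)
        · exact ⟨b, Sym2.mem_mk_right _ _, hb⟩
      · exact ⟨a, Sym2.mem_mk_left _ _, ha⟩
    exact mem_filter.2 ⟨B.edge_mem _ hab, not_disjoint_iff.2 ⟨_, B.vert_mem_edge _ hab z hz, hzU⟩⟩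
  calc c.length = #c.edges.toFinset := by
        rw [List.toFinset_card_of_nodup hc.edges_nodup, Walk.length_edges]
    _ ≤ _ := card_le_card_of_injOn B.edge (fun e he => hmaps e (by simpa using he))
        (B.injOn_edge.mono fun e he => c.edges_subset_edgeSet (by simpa using he))

theorem exists_ne_vert_mem_of_isCycle {V₂ : Finset V} {M : Finset (Finset V)}
    (hV₂ : ∀ v ∈ V₂, ∀ e ∈ H, ∀ e' ∈ H, v ∈ e → v ∈ e' → e = e')
    (hcover : ∀ e ∈ H, ∀ v ∈ e, v ∈ V₁ ∨ v ∈ V₂ ∨ ∃ A ∈ M, v ∈ A)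
    (hM : ∀ A ∈ M, ∀ e ∈ H, ¬ Disjoint e A → e ⊆ A ∪ V₁)
    (hMcard : ∀ A ∈ M, #{e ∈ H | ¬ Disjoint e A} < G.girth)
    {x : α} (c : G.Walk x x) (hc : c.IsCycle) : ∃ y ∈ c.support, B.vert y ∈ V₁ ∧ y ≠ x := by
  by_contra! hV₁
  cases c with
  | nil => exact hc.ne_nil rfl
  | @cons _ w _ hxw q =>
    cases q with
    | nil => exact G.ne_of_adj hxw rfl
    | @cons _ w₂ _ hww₂ _ =>
      -- `w` lies in the hyperedges of two distinct cycle edges, so it is placed in some `A ∈ M`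
      have he₁ : s(x, w) ∈ G.edgeSet := hxw
      have he₂ : s(w, w₂) ∈ G.edgeSet := hww₂
      have hne : s(x, w) ≠ s(w, w₂) := fun h =>
        ((Walk.cons_isCycle_iff _ hxw).1 hc).2 (h ▸ by simp)
      have hw₁ := B.vert_mem_edge _ he₁ w (Sym2.mem_mk_right _ _)
      have hw₂ := B.vert_mem_edge _ he₂ w (Sym2.mem_mk_left _ _)
      have hwV₁ : B.vert w ∉ V₁ := fun h => hxw.ne' (hV₁ w (by simp) h)
      have hwV₂ : B.vert w ∉ V₂ := fun h => hne <| B.injOn_edge he₁ he₂ <|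
        hV₂ _ h _ (B.edge_mem _ he₁) _ (B.edge_mem _ he₂) hw₁ hw₂
      obtain ⟨A, hA, hwA⟩ :=
        ((hcover _ (B.edge_mem _ he₁) _ hw₁).resolve_left hwV₁).resolve_left hwV₂
      exact (B.length_le_card_filter_not_disjoint (hM A hA) hxw _ hc hV₁ hwA).not_gt
        ((hMcard A hA).trans_le (G.girth_le_length hc))

end BergeCopy

section Construction

variable {V : Type*} [DecidableEq V] {V₁ V₂ A e : Finset V} {E₀ M : Finset (Finset V)} {r : ℕ}

def starEdges (V₁ : Finset V) (r : ℕ) (A : Finset V) : Finset (Finset V) :=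
  (V₁.powersetCard r).image (fun W => A ∪ W)

theorem subset_union_of_mem_starEdges (he : e ∈ starEdges V₁ r A) : e ⊆ A ∪ V₁ := by
  obtain ⟨W, hW, rfl⟩ := mem_image.1 he
  exact union_subset_union subset_rfl (mem_powersetCard.1 hW).1

theorem card_starEdges_le : #(starEdges V₁ r A) ≤ (#V₁).choose r :=
  card_image_le.trans (card_powersetCard r V₁).le

theorem mem_starEdges_of_not_disjoint (hE₀ : ∀ e ∈ E₀, e ⊆ V₁ ∪ V₂)
    (hM : ∀ A ∈ M, Disjoint A (V₁ ∪ V₂))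
    (hMdisj : ∀ A ∈ M, ∀ A' ∈ M, A ≠ A' → Disjoint A A') (hA : A ∈ M)
    (he : e ∈ E₀ ∪ M.biUnion (starEdges V₁ r)) (hmeet : ¬ Disjoint e A) :
    e ∈ starEdges V₁ r A := by
  rcases mem_union.1 he with he | he
  · exact absurd (disjoint_of_subset_left (hE₀ e he) (hM A hA).symm) hmeet
  · obtain ⟨A', hA', he'⟩ := mem_biUnion.1 he
    obtain rfl : A' = A := by
      by_contra hne
      refine hmeet (disjoint_of_subset_left (subset_union_of_mem_starEdges he') ?_)
      exact disjoint_union_left.2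
        ⟨hMdisj A' hA' A hA hne, (disjoint_union_right.1 (hM A hA)).1.symm⟩
    exact he'

theorem eq_of_mem_of_mem_of_mem_V₂
    (hE₀ : ∀ e ∈ E₀, ∀ e' ∈ E₀, e ≠ e' → Disjoint (e ∩ V₂) (e' ∩ V₂))
    (h12 : Disjoint V₁ V₂) (hM : ∀ A ∈ M, Disjoint A (V₁ ∪ V₂)) {v : V} (hv : v ∈ V₂)
    {e e' : Finset V} (he : e ∈ E₀ ∪ M.biUnion (starEdges V₁ r))
    (he' : e' ∈ E₀ ∪ M.biUnion (starEdges V₁ r)) (hve : v ∈ e) (hve' : v ∈ e') : e = e' := by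
  have hcore : ∀ e ∈ E₀ ∪ M.biUnion (starEdges V₁ r), v ∈ e → e ∈ E₀ := by
    intro e he hve
    refine (mem_union.1 he).resolve_right fun he => ?_
    obtain ⟨A, hA, heA⟩ := mem_biUnion.1 he
    have hdisj : Disjoint (A ∪ V₁) V₂ :=
      disjoint_union_left.2 ⟨(disjoint_union_right.1 (hM A hA)).2, h12⟩
    exact disjoint_left.1 hdisj (subset_union_of_mem_starEdges heA hve) hv
  by_contra hne
  exact disjoint_left.1 (hE₀ e (hcore e he hve) e' (hcore e' he' hve') hne)
    (mem_inter.2 ⟨hve, hv⟩) (mem_inter.2 ⟨hve', hv⟩)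

theorem mem_or_mem_or_exists_of_mem (hE₀ : ∀ e ∈ E₀, e ⊆ V₁ ∪ V₂)
    (he : e ∈ E₀ ∪ M.biUnion (starEdges V₁ r)) {v : V} (hv : v ∈ e) :
    v ∈ V₁ ∨ v ∈ V₂ ∨ ∃ A ∈ M, v ∈ A := by
  rcases mem_union.1 he with he | he
  · rcases mem_union.1 (hE₀ e he hv) with h | h
    exacts [Or.inl h, Or.inr (Or.inl h)]
  · obtain ⟨A, hA, heA⟩ := mem_biUnion.1 he
    rcases mem_union.1 (subset_union_of_mem_starEdges heA hv) with h | h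
    · exact Or.inr (Or.inr ⟨A, hA, h⟩)
    · exact Or.inl h

theorem subset_union_of_mem_bergeCore {α : Type*} {S : Finset α} {lab : α → V}
    {φ : Sym2 α → Finset V} {G : SimpleGraph α} (hlabim : S.image lab = V₁)
    (hφim : ∀ e ∈ E₀, ∃ p ∈ G.edgeSet, (∀ x ∈ p, x ∈ S) ∧ φ p = e)
    (hφform : ∀ x y, G.Adj x y → x ∈ S → y ∈ S →
      ∃ W ⊆ V₂, φ s(x, y) = {lab x, lab y} ∪ W)
    (he : e ∈ E₀) : e ⊆ V₁ ∪ V₂ := by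
  obtain ⟨p, hp, hpS, rfl⟩ := hφim e he
  induction p using Sym2.ind with | _ x y =>
  have hx := hpS x (Sym2.mem_mk_left x y)
  have hy := hpS y (Sym2.mem_mk_right x y)
  obtain ⟨W, hW, hxy⟩ := hφform x y hp hx hy
  rw [hxy, ← hlabim]
  exact union_subset_union
    (insert_subset (mem_image_of_mem _ hx) (singleton_subset_iff.2 (mem_image_of_mem _ hy))) hW

theorem disjoint_inter_of_mem_bergeCore {α : Type*} {S : Finset α} {φ : Sym2 α → Finset V}
    {G : SimpleGraph α} (hφim : ∀ e ∈ E₀, ∃ p ∈ G.edgeSet, (∀ x ∈ p, x ∈ S) ∧ φ p = e)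
    (hφdisj : ∀ p ∈ G.edgeSet, ∀ q ∈ G.edgeSet,
      (∀ x ∈ p, x ∈ S) → (∀ x ∈ q, x ∈ S) → p ≠ q → Disjoint (φ p ∩ V₂) (φ q ∩ V₂))
    {e e' : Finset V} (he : e ∈ E₀) (he' : e' ∈ E₀) (hne : e ≠ e') :
    Disjoint (e ∩ V₂) (e' ∩ V₂) := by
  obtain ⟨p, hp, hpS, rfl⟩ := hφim e he
  obtain ⟨q, hq, hqS, rfl⟩ := hφim e' he'
  exact hφdisj p hp q hq hpS hqS fun h => hne (h ▸ rfl)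

theorem BergeCopy.exists_ne_vert_mem_of_isCycle_of_starEdges {α : Type*} {G : SimpleGraph α}
    (B : BergeCopy G (E₀ ∪ M.biUnion (starEdges V₁ r)))
    (hE₀ : ∀ e ∈ E₀, e ⊆ V₁ ∪ V₂)
    (hE₀disj : ∀ e ∈ E₀, ∀ e' ∈ E₀, e ≠ e' → Disjoint (e ∩ V₂) (e' ∩ V₂))
    (h12 : Disjoint V₁ V₂) (hM : ∀ A ∈ M, Disjoint A (V₁ ∪ V₂))
    (hMdisj : ∀ A ∈ M, ∀ A' ∈ M, A ≠ A' → Disjoint A A')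
    (hgirth : (#V₁).choose r < G.girth) {x : α} (c : G.Walk x x) (hc : c.IsCycle) :
    ∃ y ∈ c.support, B.vert y ∈ V₁ ∧ y ≠ x :=
  B.exists_ne_vert_mem_of_isCycle
    (fun _ hv _ he _ he' => eq_of_mem_of_mem_of_mem_V₂ hE₀disj h12 hM hv he he')
    (fun _ he _ hv => mem_or_mem_or_exists_of_mem hE₀ he hv)
    (fun _ hA _ he hmeet =>
      subset_union_of_mem_starEdges (mem_starEdges_of_not_disjoint hE₀ hM hMdisj hA he hmeet))
    (fun _ hA => (card_le_card fun _ he => mem_starEdges_of_not_disjoint hE₀ hM hMdisj hA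
      (mem_filter.1 he).1 (mem_filter.1 he).2).trans_lt (card_starEdges_le.trans_lt hgirth))
    c hc

end Construction

theorem HasBerge.nonempty_bergeCopy {α V : Type*} {F : SimpleGraph α} {H : Finset (Finset V)}
    (h : HasBerge F H) : Nonempty (BergeCopy F H) :=
  let ⟨ψ, hψ, φ, hφ, hmem⟩ := h
  ⟨⟨ψ, hψ, φ, hφ, fun e he => (hmem e he).1, fun e he => (hmem e he).2⟩⟩

theorem stmt17_general {α V : Type*} [Fintype α] [DecidableEq V]
    (G : SimpleGraph α) (hcyc : ¬ G.IsAcyclic)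
    (k f : ℕ) (hf : f = feedbackNum G) (hfg : (f : ℕ∞) < G.girth)
    (S : Finset α)
    (V₁ V₂ : Finset V) (hV₁ : V₁.card = f) (h12 : Disjoint V₁ V₂)
    (lab : α → V) (hlabim : S.image lab = V₁)
    (E₀ : Finset (Finset V))
    (φ : Sym2 α → Finset V)
    (hφim : ∀ e ∈ E₀, ∃ p ∈ G.edgeSet, (∀ x ∈ p, x ∈ S) ∧ φ p = e)
    (hφform : ∀ x y, G.Adj x y → x ∈ S → y ∈ S →
      ∃ W ⊆ V₂, W.card = k - 2 ∧ φ s(x, y) = {lab x, lab y} ∪ W)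
    (hφdisj : ∀ p ∈ G.edgeSet, ∀ q ∈ G.edgeSet,
      (∀ x ∈ p, x ∈ S) → (∀ x ∈ q, x ∈ S) → p ≠ q →
        Disjoint (φ p ∩ V₂) (φ q ∩ V₂))
    (M : Finset (Finset V))
    (hM : ∀ A ∈ M, A.card = k - f + 1 ∧ Disjoint A (V₁ ∪ V₂))
    (hMdisj : ∀ A ∈ M, ∀ A' ∈ M, A ≠ A' → Disjoint A A') :
    ¬ HasBerge G
      (E₀ ∪ M.biUnion
        (fun A => (V₁.powersetCard (f - 1)).image (fun W => A ∪ W))) := by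
  -- with truncated subtraction `f.choose (f - 1)` is `1`, not `f`, when `f = 0`
  have hgirth : (#V₁).choose (f - 1) < G.girth := by
    rw [hV₁]
    rcases f with _ | f
    · simpa using (three_le_girth hcyc).trans_lt' (by norm_num)
    · simpa using (by exact_mod_cast hfg : f + 1 < G.girth)
  have hE₀ : ∀ e ∈ E₀, e ⊆ V₁ ∪ V₂ := fun _ he =>
    subset_union_of_mem_bergeCore hlabim hφim
      (fun x y hxy hx hy => (hφform x y hxy hx hy).imp fun _ ⟨hW, _, h⟩ => ⟨hW, h⟩) he
  intro hB
  obtain ⟨B⟩ := HasBerge.nonempty_bergeCopy (H := E₀ ∪ M.biUnion (starEdges V₁ (f - 1))) hB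
  set T : Finset α := {v | B.vert v ∈ V₁}
  have hT : #T ≤ f :=
    hV₁ ▸ card_le_card_of_injOn B.vert (fun v hv => by simpa [T] using hv) B.injective_vert.injOn
  have hcycle : ∀ x (c : G.Walk x x), c.IsCycle → ∃ y ∈ c.support, y ∈ T ∧ y ≠ x :=
    fun x c hc => by
      simpa [T] using B.exists_ne_vert_mem_of_isCycle_of_starEdges hE₀
        (fun _ he _ he' => disjoint_inter_of_mem_bergeCore hφim hφdisj he he') h12
        (fun A hA => (hM A hA).2) hMdisj hgirth c hc
  have := feedbackNum_lt_card_of_forall_isCycle hcyc hcycle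
  omega

/-- let `G` have a cycle, girth `g`, feedback number `f` with `f < g`
and `f ≤ k`, and let `S` be a minimum feedback set. The hypergraph
`H_k(n, k−f+1, G, S)` — consisting of one `k`-edge `{lab x, lab y} ∪ W` (with
`W ⊆ V₂`, `|W| = k−2`, pairwise disjoint) for each edge `xy` of `G[S]`, together with,
for each `(k−f+1)`-set `A` of the partition `M`, all edges `A ∪ W` with `W ⊆ V₁`,
`|W| = f−1` — contains no Berge-`G`. -/
theorem stmt17 {α V : Type*} [Fintype α] [DecidableEq α] [DecidableEq V]
    (G : SimpleGraph α) (hcyc : ¬ G.IsAcyclic)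
    (k f : ℕ) (hf : f = feedbackNum G) (hfg : (f : ℕ∞) < G.girth)
    (hfk : f ≤ k) (hk : 3 ≤ k)
    (S : Finset α) (hSfeed : (G.induce ((↑S : Set α)ᶜ)).IsAcyclic)
    (hScard : S.card = f)
    (V₁ V₂ : Finset V) (hV₁ : V₁.card = f) (h12 : Disjoint V₁ V₂)
    (lab : α → V) (hlab : Set.InjOn lab ↑S) (hlabim : S.image lab = V₁)
    (E₀ : Finset (Finset V))
    (φ : Sym2 α → Finset V)
    (hφinj : Set.InjOn φ {e | e ∈ G.edgeSet ∧ ∀ x ∈ e, x ∈ S})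
    (hφim : ∀ e ∈ E₀, ∃ p ∈ G.edgeSet, (∀ x ∈ p, x ∈ S) ∧ φ p = e)
    (hφmem : ∀ p ∈ G.edgeSet, (∀ x ∈ p, x ∈ S) → φ p ∈ E₀)
    (hφform : ∀ x y, G.Adj x y → x ∈ S → y ∈ S →
      ∃ W ⊆ V₂, W.card = k - 2 ∧ φ s(x, y) = {lab x, lab y} ∪ W)
    (hφdisj : ∀ p ∈ G.edgeSet, ∀ q ∈ G.edgeSet,
      (∀ x ∈ p, x ∈ S) → (∀ x ∈ q, x ∈ S) → p ≠ q →
        Disjoint (φ p ∩ V₂) (φ q ∩ V₂))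
    (M : Finset (Finset V))
    (hM : ∀ A ∈ M, A.card = k - f + 1 ∧ Disjoint A (V₁ ∪ V₂))
    (hMdisj : ∀ A ∈ M, ∀ A' ∈ M, A ≠ A' → Disjoint A A') :
    ¬ HasBerge G
      (E₀ ∪ M.biUnion
        (fun A => (V₁.powersetCard (f - 1)).image (fun W => A ∪ W))) :=
  stmt17_general G hcyc k f hf hfg S V₁ V₂ hV₁ h12 lab hlabim E₀ φ hφim hφform hφdisj M hM hMdisj
end

section
/- For n ≥ 10 and k = 3, ℓ = 4: sat_3(n, Berge-K₄) ≤ n if n is odd, and sat_3(n, Berge-K₄) ≤ n + 1 if n is even. -/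
/-! Let `a`, `b` be isolated vertices of a graph `G` whose other vertices span a star forest
without isolated vertices, and let `c` be a leaf of `G` whose centre `d` has a second
neighbour `w`. Take the triple `{a, b, c}` together with `e ∪ {a}` and `e ∪ {b}` for every
edge `e` of `G`. The core of a Berge-`K₄` meets the complement of `{a, b}` in a `G`-clique,
hence in at most two vertices, so it is `{a, b, x, y}` with `x` a leaf whose neighbour is `y`.
The pair `ab` uses up `{a, b, c}`, and the three pairs `ax`, `bx`, `xy` must then share the two
triples `{a, x, y}` and `{b, x, y}`. Conversely a new triple `e` completes a Berge-`K₄` on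
`{c, d, a, b}` if `a, b ∈ e`, and otherwise on `{a, b, y, z}` for two non-adjacent `y, z ∈ e`
outside `{a, b}`. On `Fin n`, a star with two or three leaves plus a matching has at most
`n / 2` edges, which gives at most `2 * (n / 2) + 1` triples. -/

open Finset

variable {V : Type*}

namespace SimpleGraph

variable {G : SimpleGraph V}

def IsStarForest (G : SimpleGraph V) : Prop :=
  ∀ ⦃x y⦄, G.Adj x y → (∀ z, G.Adj x z → z = y) ∨ (∀ z, G.Adj y z → z = x)

lemma IsStarForest.not_triangle (hG : G.IsStarForest) {x y z : V} (hxy : G.Adj x y)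
    (hyz : G.Adj y z) (hxz : G.Adj x z) : False := by
  rcases hG hxy with hx | hy
  · exact hyz.ne (hx z hxz).symm
  · exact hxz.ne (hy z hyz).symm

lemma Adj.ne_of_forall_not_adj {a x y : V} (hxy : G.Adj x y) (ha : ∀ z, ¬ G.Adj a z) :
    x ≠ a :=
  fun h => ha y (h ▸ hxy)

lemma card_edgeFinset_le_card_filter [Fintype V] [Fintype G.edgeSet] (r : V → V → Prop)
    [DecidableRel r] (hr : ∀ x y, G.Adj x y → r x y ∨ r y x) :
    #G.edgeFinset ≤ #{p : V × V | r p.1 p.2} := by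
  classical
  refine (card_le_card (s := G.edgeFinset)
    (t := image (fun p => s(p.1, p.2)) {p : V × V | r p.1 p.2}) fun e he => ?_).trans
    card_image_le
  induction e using Sym2.ind with
  | h x y =>
    rcases hr x y (mem_edgeFinset.mp he) with h | h
    · exact mem_image.mpr ⟨(x, y), by simpa using h, rfl⟩
    · exact mem_image.mpr ⟨(y, x), by simpa using h, Sym2.eq_swap⟩

end SimpleGraph

lemma hasBergeCliqueOn_of_list {H : Finset (Finset V)} {core : Finset V}
    (L : List (Sym2 V × Finset V)) (hfst : (L.map Prod.fst).Nodup)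
    (hsnd : (L.map Prod.snd).Nodup) (hL : ∀ p ∈ L, p.2 ∈ H ∧ ∀ x ∈ p.1, x ∈ p.2)
    (hcore : ∀ x ∈ core, ∀ y ∈ core, x ≠ y → s(x, y) ∈ L.map Prod.fst) :
    HasBergeCliqueOn H core := by
  classical
  let φ : Sym2 V → Finset V := fun p => if hp : ∃ h, (p, h) ∈ L then hp.choose else ∅
  have hφ : ∀ q ∈ L, φ q.1 = q.2 := fun q hq => by
    have hp : ∃ h, (q.1, h) ∈ L := ⟨q.2, hq⟩
    simp only [φ, dif_pos hp]
    exact congrArg Prod.snd (List.inj_on_of_nodup_map hfst hp.choose_spec hq rfl)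
  refine ⟨φ, ?_, fun x hx y hy hxy => ?_⟩
  · rintro _ ⟨x, hx, y, hy, hxy, rfl⟩ _ ⟨u, hu, v, hv, huv, rfl⟩ he
    obtain ⟨q, hq, hqxy⟩ := List.mem_map.mp (hcore x hx y hy hxy)
    obtain ⟨r, hr, hruv⟩ := List.mem_map.mp (hcore u hu v hv huv)
    rw [← hqxy, ← hruv] at he ⊢
    rw [hφ q hq, hφ r hr] at he
    exact congrArg Prod.fst (List.inj_on_of_nodup_map hsnd hq hr he)
  · obtain ⟨q, hq, hqxy⟩ := List.mem_map.mp (hcore x hx y hy hxy)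
    obtain ⟨hqH, hqmem⟩ := hL q hq
    rw [← hqxy, hφ q hq]
    exact ⟨hqH, hqmem x (hqxy ▸ Sym2.mem_mk_left x y), hqmem y (hqxy ▸ Sym2.mem_mk_right x y)⟩

variable [DecidableEq V]

lemma hasBergeClique_four {H : Finset (Finset V)} {v₁ v₂ v₃ v₄ : V}
    {e₁₂ e₁₃ e₁₄ e₂₃ e₂₄ e₃₄ : Finset V}
    (hv : [v₁, v₂, v₃, v₄].Nodup) (he : [e₁₂, e₁₃, e₁₄, e₂₃, e₂₄, e₃₄].Nodup)
    (h₁₂ : e₁₂ ∈ H ∧ v₁ ∈ e₁₂ ∧ v₂ ∈ e₁₂) (h₁₃ : e₁₃ ∈ H ∧ v₁ ∈ e₁₃ ∧ v₃ ∈ e₁₃)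
    (h₁₄ : e₁₄ ∈ H ∧ v₁ ∈ e₁₄ ∧ v₄ ∈ e₁₄) (h₂₃ : e₂₃ ∈ H ∧ v₂ ∈ e₂₃ ∧ v₃ ∈ e₂₃)
    (h₂₄ : e₂₄ ∈ H ∧ v₂ ∈ e₂₄ ∧ v₄ ∈ e₂₄) (h₃₄ : e₃₄ ∈ H ∧ v₃ ∈ e₃₄ ∧ v₄ ∈ e₃₄) :
    HasBergeClique 4 H := by
  refine ⟨[v₁, v₂, v₃, v₄].toFinset, List.toFinset_card_of_nodup hv,
    hasBergeCliqueOn_of_list [(s(v₁, v₂), e₁₂), (s(v₁, v₃), e₁₃), (s(v₁, v₄), e₁₄),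
      (s(v₂, v₃), e₂₃), (s(v₂, v₄), e₂₄), (s(v₃, v₄), e₃₄)] ?_ he ?_ ?_⟩
  all_goals simp only [List.nodup_cons, List.mem_cons, List.not_mem_nil] at hv
  · simp
    tauto
  · simp only [List.mem_cons, List.not_mem_nil, or_false, forall_eq_or_imp, forall_eq,
      Sym2.mem_iff]
    aesop
  · intro x hx y hy hxy
    simp only [List.mem_toFinset, List.mem_cons, List.not_mem_nil, or_false] at hx hy
    rcases hx with rfl | rfl | rfl | rfl <;> rcases hy with rfl | rfl | rfl | rfl <;>
      simp_all [Sym2.eq_swap]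

lemma hasBergeClique_four_insert {H : Finset (Finset V)} {e : Finset V} (he : e ∉ H)
    {v₁ v₂ v₃ v₄ : V} {e₁₂ e₁₃ e₁₄ e₂₃ e₂₄ : Finset V}
    (hv : [v₁, v₂, v₃, v₄].Nodup) (hH : [e₁₂, e₁₃, e₁₄, e₂₃, e₂₄].Nodup)
    (h₁₂ : e₁₂ ∈ H ∧ v₁ ∈ e₁₂ ∧ v₂ ∈ e₁₂) (h₁₃ : e₁₃ ∈ H ∧ v₁ ∈ e₁₃ ∧ v₃ ∈ e₁₃)
    (h₁₄ : e₁₄ ∈ H ∧ v₁ ∈ e₁₄ ∧ v₄ ∈ e₁₄) (h₂₃ : e₂₃ ∈ H ∧ v₂ ∈ e₂₃ ∧ v₃ ∈ e₂₃)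
    (h₂₄ : e₂₄ ∈ H ∧ v₂ ∈ e₂₄ ∧ v₄ ∈ e₂₄) (h₃₄ : v₃ ∈ e ∧ v₄ ∈ e) :
    HasBergeClique 4 (insert e H) := by
  refine hasBergeClique_four hv (hH.concat fun hmem => he ?_)
    ⟨mem_insert_of_mem h₁₂.1, h₁₂.2⟩ ⟨mem_insert_of_mem h₁₃.1, h₁₃.2⟩
    ⟨mem_insert_of_mem h₁₄.1, h₁₄.2⟩ ⟨mem_insert_of_mem h₂₃.1, h₂₃.2⟩
    ⟨mem_insert_of_mem h₂₄.1, h₂₄.2⟩ ⟨mem_insert_self e H, h₃₄⟩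
  simp only [List.mem_cons, List.not_mem_nil, or_false] at hmem
  rcases hmem with rfl | rfl | rfl | rfl | rfl
  exacts [h₁₂.1, h₁₃.1, h₁₄.1, h₂₃.1, h₂₄.1]

lemma Finset.ne_and_mem_and_mem_of_card_filter_le {s : Finset V} {a b : V} {k : ℕ}
    (hs : #s = k + 2) (h : #{v ∈ s | v ≠ a ∧ v ≠ b} ≤ k) :
    a ≠ b ∧ a ∈ s ∧ b ∈ s ∧ #{v ∈ s | v ≠ a ∧ v ≠ b} = k := by
  have hrest : {v ∈ s | ¬ (v ≠ a ∧ v ≠ b)} ⊆ {a, b} := fun v hv => by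
    simp only [mem_filter] at hv
    simp only [mem_insert, mem_singleton]
    tauto
  have hsplit : #{v ∈ s | v ≠ a ∧ v ≠ b} + #{v ∈ s | ¬ (v ≠ a ∧ v ≠ b)} = k + 2 :=
    (card_filter_add_card_filter_not _).trans hs
  have hab_le : #({a, b} : Finset V) ≤ 2 := card_le_two
  have hrest_eq := eq_of_subset_of_card_le hrest (by omega)
  have hrest_card := congrArg card hrest_eq
  have hmem : ∀ v ∈ ({a, b} : Finset V), v ∈ s := fun v hv => (mem_filter.mp (hrest_eq ▸ hv)).1
  refine ⟨?_, hmem a (by simp), hmem b (by simp), by omega⟩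
  rintro rfl
  simp only [insert_eq_of_mem (mem_singleton_self a), card_singleton] at hrest_card
  omega

def doubleCone (G : SimpleGraph V) [Fintype G.edgeSet] (a b c : V) : Finset (Finset V) :=
  insert {a, b, c} (G.edgeFinset.image (insert a ·.toFinset) ∪
    G.edgeFinset.image (insert b ·.toFinset))

section DoubleCone

variable {G : SimpleGraph V} [Fintype G.edgeSet] {a b c : V}

lemma mem_doubleCone {h : Finset V} :
    h ∈ doubleCone G a b c ↔
      h = {a, b, c} ∨ ∃ x y, G.Adj x y ∧ (h = {a, x, y} ∨ h = {b, x, y}) := by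
  simp only [doubleCone, mem_insert, mem_union, mem_image, SimpleGraph.mem_edgeFinset,
    Sym2.exists, SimpleGraph.mem_edgeSet, Sym2.toFinset_mk_eq]
  aesop

lemma abc_mem_doubleCone : ({a, b, c} : Finset V) ∈ doubleCone G a b c :=
  mem_doubleCone.mpr (Or.inl rfl)

lemma left_mem_doubleCone {x y : V} (hxy : G.Adj x y) :
    ({a, x, y} : Finset V) ∈ doubleCone G a b c :=
  mem_doubleCone.mpr (Or.inr ⟨x, y, hxy, Or.inl rfl⟩)

lemma right_mem_doubleCone {x y : V} (hxy : G.Adj x y) :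
    ({b, x, y} : Finset V) ∈ doubleCone G a b c :=
  mem_doubleCone.mpr (Or.inr ⟨x, y, hxy, Or.inr rfl⟩)

lemma card_doubleCone_le : #(doubleCone G a b c) ≤ 2 * #G.edgeFinset + 1 := by
  unfold doubleCone
  have := card_union_le (G.edgeFinset.image (insert a ·.toFinset))
    (G.edgeFinset.image (insert b ·.toFinset))
  have := card_image_le (s := G.edgeFinset) (f := (insert a ·.toFinset))
  have := card_image_le (s := G.edgeFinset) (f := (insert b ·.toFinset))
  exact (card_insert_le _ _).trans (by omega)

lemma card_eq_three_of_mem_doubleCone (hab : a ≠ b) (hca : c ≠ a) (hcb : c ≠ b)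
    (ha : ∀ x, ¬ G.Adj a x) (hb : ∀ x, ¬ G.Adj b x) {h : Finset V}
    (hh : h ∈ doubleCone G a b c) : #h = 3 := by
  rw [card_eq_three]
  rcases mem_doubleCone.mp hh with rfl | ⟨x, y, hxy, rfl | rfl⟩
  · exact ⟨a, b, c, hab, hca.symm, hcb.symm, rfl⟩
  · exact ⟨a, x, y, (hxy.ne_of_forall_not_adj ha).symm,
      (hxy.symm.ne_of_forall_not_adj ha).symm, hxy.ne, rfl⟩
  · exact ⟨b, x, y, (hxy.ne_of_forall_not_adj hb).symm,
      (hxy.symm.ne_of_forall_not_adj hb).symm, hxy.ne, rfl⟩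

lemma adj_of_mem_doubleCone {h : Finset V} (hh : h ∈ doubleCone G a b c) {x y : V}
    (hx : x ∈ h) (hy : y ∈ h) (hxy : x ≠ y) (hxa : x ≠ a) (hxb : x ≠ b)
    (hya : y ≠ a) (hyb : y ≠ b) : G.Adj x y := by
  rcases mem_doubleCone.mp hh with rfl | ⟨u, v, huv, rfl | rfl⟩ <;>
    simp only [mem_insert, mem_singleton] at hx hy <;>
    rcases hx with rfl | rfl | rfl <;> rcases hy with rfl | rfl | rfl <;>
    first | contradiction | exact huv | exact huv.symm

lemma eq_of_mem_doubleCone_of_mem_of_mem (hab : a ≠ b) (ha : ∀ x, ¬ G.Adj a x)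
    (hb : ∀ x, ¬ G.Adj b x) {h : Finset V} (hh : h ∈ doubleCone G a b c) (hah : a ∈ h)
    (hbh : b ∈ h) : h = {a, b, c} := by
  rcases mem_doubleCone.mp hh with rfl | ⟨x, y, hxy, rfl | rfl⟩
  · rfl
  · simp only [mem_insert, mem_singleton] at hbh
    rcases hbh with h | rfl | rfl
    exacts [absurd h.symm hab, absurd hxy (hb y), absurd hxy.symm (hb x)]
  · simp only [mem_insert, mem_singleton] at hah
    rcases hah with h | rfl | rfl
    exacts [absurd h hab, absurd hxy (ha y), absurd hxy.symm (ha x)]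

lemma eq_of_mem_doubleCone_of_leaf {h : Finset V} (hh : h ∈ doubleCone G a b c)
    (habc : h ≠ {a, b, c}) {x y : V} (hxh : x ∈ h) (hxa : x ≠ a) (hxb : x ≠ b)
    (hleaf : ∀ z, G.Adj x z → z = y) : h = {a, x, y} ∨ h = {b, x, y} := by
  rcases mem_doubleCone.mp hh with rfl | ⟨u, v, huv, rfl | rfl⟩
  · exact absurd rfl habc
  all_goals
    simp only [mem_insert, mem_singleton] at hxh
    rcases hxh with rfl | rfl | rfl
  all_goals first
    | contradiction
    | (obtain rfl := hleaf _ huv; simp)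
    | (obtain rfl := hleaf _ huv.symm; simp [pair_comm])

lemma BergeCliqueMap.false_of_leaf_doubleCone {core : Finset V} {φ : Sym2 V → Finset V}
    (hφ : BergeCliqueMap (doubleCone G a b c) core φ) (hab : a ≠ b) (ha : ∀ x, ¬ G.Adj a x)
    (hb : ∀ x, ¬ G.Adj b x) {x y : V} (haC : a ∈ core) (hbC : b ∈ core) (hxC : x ∈ core)
    (hyC : y ∈ core) (hxa : x ≠ a) (hxb : x ≠ b) (hya : y ≠ a) (hyb : y ≠ b) (hxy : x ≠ y)
    (hleaf : ∀ z, G.Adj x z → z = y) : False := by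
  obtain ⟨hinj, hcov⟩ := hφ
  have inj : ∀ {u v u' v'}, u ∈ core → v ∈ core → u ≠ v → u' ∈ core → v' ∈ core → u' ≠ v' →
      φ s(u, v) = φ s(u', v') → s(u, v) = s(u', v') :=
    fun hu hv huv hu' hv' huv' => hinj ⟨_, hu, _, hv, huv, rfl⟩ ⟨_, hu', _, hv', huv', rfl⟩
  have hφab : φ s(a, b) = {a, b, c} := by
    obtain ⟨hmem, hah, hbh⟩ := hcov a haC b hbC hab
    exact eq_of_mem_doubleCone_of_mem_of_mem hab ha hb hmem hah hbh
  have hφx : ∀ {u}, u ∈ core → u ≠ x → s(u, x) ≠ s(a, b) →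
      φ s(u, x) = {a, x, y} ∨ φ s(u, x) = {b, x, y} := fun hu hux hne => by
    obtain ⟨hmem, -, hxh⟩ := hcov _ hu x hxC hux
    exact eq_of_mem_doubleCone_of_leaf hmem (fun h => hne (inj hu hxC hux haC hbC hab
      (h.trans hφab.symm))) hxh hxa hxb hleaf
  have hφax : φ s(a, x) = {a, x, y} := by
    refine (hφx haC hxa.symm (by simp [hxb, hab])).resolve_right fun h => ?_
    have := h ▸ (hcov a haC x hxC hxa.symm).2.1
    simp only [mem_insert, mem_singleton] at this
    tauto
  have hφbx : φ s(b, x) = {b, x, y} := by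
    refine (hφx hbC hxb.symm (by simp [hxa, hab.symm])).resolve_left fun h => ?_
    have := h ▸ (hcov b hbC x hxC hxb.symm).2.1
    simp only [mem_insert, mem_singleton] at this
    tauto
  rcases hφx (u := y) hyC hxy.symm (by simp [hya, hxa]) with h | h
  · have := inj hyC hxC hxy.symm haC hxC hxa.symm (h.trans hφax.symm)
    simp_all
  · have := inj hyC hxC hxy.symm hbC hxC hxb.symm (h.trans hφbx.symm)
    simp_all

lemma not_hasBergeClique_doubleCone (hG : G.IsStarForest) (ha : ∀ x, ¬ G.Adj a x)
    (hb : ∀ x, ¬ G.Adj b x) : ¬ HasBergeClique 4 (doubleCone G a b c) := by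
  rintro ⟨core, hcard, φ, hφ⟩
  set S := {v ∈ core | v ≠ a ∧ v ≠ b}
  have hS : ∀ x ∈ S, ∀ y ∈ S, x ≠ y → G.Adj x y := by
    intro x hx y hy hxy
    simp only [S, mem_filter] at hx hy
    obtain ⟨hmem, hxh, hyh⟩ := hφ.2 x hx.1 y hy.1 hxy
    exact adj_of_mem_doubleCone hmem hxh hyh hxy hx.2.1 hx.2.2 hy.2.1 hy.2.2
  have hS_le : #S ≤ 2 := by
    by_contra! h
    obtain ⟨x, hx, y, hy, z, hz, hxy, hxz, hyz⟩ := two_lt_card.mp h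
    exact hG.not_triangle (hS x hx y hy hxy) (hS y hy z hz hyz) (hS x hx z hz hxz)
  obtain ⟨hab, haC, hbC, hS_card⟩ := ne_and_mem_and_mem_of_card_filter_le hcard hS_le
  obtain ⟨x, y, hxy, hS_eq⟩ := card_eq_two.mp hS_card
  have hx : x ∈ S := by rw [show S = {x, y} from hS_eq]; simp
  have hy : y ∈ S := by rw [show S = {x, y} from hS_eq]; simp
  have hadj := hS x hx y hy hxy
  simp only [S, mem_filter] at hx hy
  rcases hG hadj with hleaf | hleaf
  · exact hφ.false_of_leaf_doubleCone hab ha hb haC hbC hx.1 hy.1 hx.2.1 hx.2.2 hy.2.1 hy.2.2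
      hxy hleaf
  · exact hφ.false_of_leaf_doubleCone hab ha hb haC hbC hy.1 hx.1 hy.2.1 hy.2.2 hx.2.1 hx.2.2
      hxy.symm hleaf

lemma exists_not_adj_of_notMem_doubleCone (hG : G.IsStarForest) {e : Finset V}
    (he : #e = 3) (heD : e ∉ doubleCone G a b c) (hab : ¬ (a ∈ e ∧ b ∈ e)) :
    ∃ y ∈ e, ∃ z ∈ e, y ≠ z ∧ y ≠ a ∧ y ≠ b ∧ z ≠ a ∧ z ≠ b ∧ ¬ G.Adj y z := by
  by_cases hs : ∃ s ∈ e, s = a ∨ s = b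
  · obtain ⟨s, hse, hs⟩ := hs
    obtain ⟨y, z, hyz, hyz_eq⟩ := card_eq_two.mp
      (show #(e.erase s) = 2 by rw [card_erase_of_mem hse, he])
    have hy : y ∈ e.erase s := by simp [hyz_eq]
    have hz : z ∈ e.erase s := by simp [hyz_eq]
    have he' : e = {s, y, z} := by rw [← insert_erase hse, hyz_eq]
    simp only [mem_erase] at hy hz
    refine ⟨y, hy.2, z, hz.2, hyz, ?_, ?_, ?_, ?_, fun hadj => heD ?_⟩
    any_goals rintro rfl; rcases hs with rfl | rfl <;> tauto
    rw [he']
    rcases hs with rfl | rfl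
    exacts [left_mem_doubleCone hadj, right_mem_doubleCone hadj]
  · push Not at hs
    obtain ⟨x, y, z, hxy, hxz, hyz, rfl⟩ := card_eq_three.mp he
    obtain ⟨hxa, hxb⟩ := hs x (by simp)
    obtain ⟨hya, hyb⟩ := hs y (by simp)
    obtain ⟨hza, hzb⟩ := hs z (by simp)
    by_cases hxy' : G.Adj x y
    · by_cases hyz' : G.Adj y z
      · exact ⟨x, by simp, z, by simp, hxz, hxa, hxb, hza, hzb, hG.not_triangle hxy' hyz'⟩
      · exact ⟨y, by simp, z, by simp, hyz, hya, hyb, hza, hzb, hyz'⟩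
    · exact ⟨x, by simp, y, by simp, hxy, hxa, hxb, hya, hyb, hxy'⟩

lemma hasBergeClique_insert_doubleCone_of_mem_of_mem (hab : a ≠ b) (ha : ∀ x, ¬ G.Adj a x)
    (hb : ∀ x, ¬ G.Adj b x) {d w : V} (hcd : G.Adj c d) (hdw : G.Adj d w) (hwc : w ≠ c)
    {e : Finset V} (heD : e ∉ doubleCone G a b c) (hae : a ∈ e) (hbe : b ∈ e) :
    HasBergeClique 4 (insert e (doubleCone G a b c)) := by
  have := hcd.ne_of_forall_not_adj ha; have := hcd.ne_of_forall_not_adj hb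
  have := hdw.ne_of_forall_not_adj ha; have := hdw.ne_of_forall_not_adj hb
  have := hdw.symm.ne_of_forall_not_adj ha; have := hdw.symm.ne_of_forall_not_adj hb
  have := hcd.ne; have := hdw.ne
  refine hasBergeClique_four_insert heD (v₁ := c) (v₂ := d) (v₃ := a) (v₄ := b)
    (by simp only [List.nodup_cons, List.mem_cons, List.not_mem_nil]; grind) ?_
    ⟨left_mem_doubleCone hcd, by simp, by simp⟩ ⟨abc_mem_doubleCone, by simp, by simp⟩
    ⟨right_mem_doubleCone hcd, by simp, by simp⟩ ⟨left_mem_doubleCone hdw, by simp, by simp⟩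
    ⟨right_mem_doubleCone hdw, by simp, by simp⟩ ⟨hae, hbe⟩
  simp only [List.nodup_cons, List.mem_cons, List.not_mem_nil, List.nodup_nil, not_or,
    or_false, not_false_eq_true, and_true]
  and_intros
  all_goals
    intro h
    -- the five triples are told apart by which of `a`, `b`, `c`, `d` they contain
    have := congrArg (fun s : Finset V => (a ∈ s, b ∈ s, c ∈ s, d ∈ s)) h
    simp only [mem_insert, mem_singleton, Prod.mk.injEq] at this
    grind

lemma hasBergeClique_insert_doubleCone_of_not_adj (hab : a ≠ b) (ha : ∀ x, ¬ G.Adj a x)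
    (hb : ∀ x, ¬ G.Adj b x) (hadj : ∀ x, x ≠ a → x ≠ b → ∃ y, G.Adj x y)
    {e : Finset V} (heD : e ∉ doubleCone G a b c) {y z : V} (hye : y ∈ e) (hze : z ∈ e)
    (hyz : y ≠ z) (hya : y ≠ a) (hyb : y ≠ b) (hza : z ≠ a) (hzb : z ≠ b)
    (hnyz : ¬ G.Adj y z) : HasBergeClique 4 (insert e (doubleCone G a b c)) := by
  obtain ⟨y', hyy'⟩ := hadj y hya hyb
  obtain ⟨z', hzz'⟩ := hadj z hza hzb
  have := hyy'.symm.ne_of_forall_not_adj ha; have := hyy'.symm.ne_of_forall_not_adj hb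
  have := hzz'.symm.ne_of_forall_not_adj ha; have := hzz'.symm.ne_of_forall_not_adj hb
  have := hyy'.ne; have := hzz'.ne
  have hy'z : y' ≠ z := fun h => hnyz (h ▸ hyy')
  have hz'y : z' ≠ y := fun h => hnyz (h ▸ hzz'.symm)
  refine hasBergeClique_four_insert heD (v₁ := a) (v₂ := b) (v₃ := y) (v₄ := z)
    (by simp only [List.nodup_cons, List.mem_cons, List.not_mem_nil]; grind) ?_
    ⟨abc_mem_doubleCone, by simp, by simp⟩ ⟨left_mem_doubleCone hyy', by simp, by simp⟩
    ⟨left_mem_doubleCone hzz', by simp, by simp⟩ ⟨right_mem_doubleCone hyy', by simp, by simp⟩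
    ⟨right_mem_doubleCone hzz', by simp, by simp⟩ ⟨hye, hze⟩
  simp only [List.nodup_cons, List.mem_cons, List.not_mem_nil, List.nodup_nil, not_or,
    or_false, not_false_eq_true, and_true]
  and_intros
  all_goals
    intro h
    have := congrArg (fun s : Finset V => (a ∈ s, b ∈ s, y ∈ s, z ∈ s)) h
    simp only [mem_insert, mem_singleton, Prod.mk.injEq] at this
    grind

lemma hasBergeClique_insert_doubleCone (hab : a ≠ b) (ha : ∀ x, ¬ G.Adj a x)
    (hb : ∀ x, ¬ G.Adj b x) (hadj : ∀ x, x ≠ a → x ≠ b → ∃ y, G.Adj x y)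
    (hG : G.IsStarForest) {d w : V} (hcd : G.Adj c d) (hdw : G.Adj d w) (hwc : w ≠ c)
    {e : Finset V} (he : #e = 3) (heD : e ∉ doubleCone G a b c) :
    HasBergeClique 4 (insert e (doubleCone G a b c)) := by
  by_cases habe : a ∈ e ∧ b ∈ e
  · exact hasBergeClique_insert_doubleCone_of_mem_of_mem hab ha hb hcd hdw hwc heD habe.1 habe.2
  · obtain ⟨y, hye, z, hze, hyz, hya, hyb, hza, hzb, hnyz⟩ :=
      exists_not_adj_of_notMem_doubleCone hG he heD habe
    exact hasBergeClique_insert_doubleCone_of_not_adj hab ha hb hadj heD hye hze hyz hya hyb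
      hza hzb hnyz

end DoubleCone

/-- The star with centre `3` and leaves `2`, `4` (and `n - 1` when `n` is even), together with
the matching `{2k + 1, 2k + 2}`, `k ≥ 2`, on the remaining vertices; `0` and `1` are isolated. -/
def starMatchingRel (n i j : ℕ) : Prop :=
  i = 2 ∧ j = 3 ∨ 3 ≤ i ∧ i % 2 = 1 ∧ (j = i + 1 ∨ j = 3 ∧ i + 1 = n)

def starMatchingGraph (n : ℕ) : SimpleGraph (Fin n) :=
  SimpleGraph.fromRel fun x y => starMatchingRel n x y

section StarMatching

variable {n : ℕ}

lemma starMatchingGraph_adj {x y : Fin n} :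
    (starMatchingGraph n).Adj x y ↔
      (x : ℕ) ≠ y ∧ (starMatchingRel n x y ∨ starMatchingRel n y x) := by
  simp [starMatchingGraph, Fin.val_ne_iff]

lemma starMatchingGraph_not_adj_of_lt_two {x : Fin n} (hx : (x : ℕ) < 2) (y : Fin n) :
    ¬ (starMatchingGraph n).Adj x y := by
  simp only [starMatchingGraph_adj, starMatchingRel]
  omega

lemma starMatchingGraph_exists_adj (hn : 5 ≤ n) {x : Fin n} (hx : 2 ≤ (x : ℕ)) :
    ∃ y, (starMatchingGraph n).Adj x y := by
  have hx' := x.isLt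
  refine ⟨⟨if (x : ℕ) = 2 then 3 else if (x : ℕ) % 2 = 0 then x - 1
    else if (x : ℕ) + 1 < n then x + 1 else 3, by split_ifs <;> omega⟩, ?_⟩
  simp only [starMatchingGraph_adj, starMatchingRel]
  split_ifs <;> omega

lemma starMatchingGraph_isStarForest : (starMatchingGraph n).IsStarForest := by
  intro x y hxy
  have := x.isLt; have := y.isLt
  by_cases hx : (x : ℕ) = 3
  · refine Or.inr fun z hz => Fin.ext ?_
    have := z.isLt
    simp only [starMatchingGraph_adj, starMatchingRel] at hxy hz
    omega
  · refine Or.inl fun z hz => Fin.ext ?_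
    have := z.isLt
    simp only [starMatchingGraph_adj, starMatchingRel] at hxy hz
    omega

lemma card_edgeFinset_starMatchingGraph_le [Fintype (starMatchingGraph n).edgeSet] :
    #(starMatchingGraph n).edgeFinset ≤ n / 2 := by
  classical
  refine (SimpleGraph.card_edgeFinset_le_card_filter _ fun x y h =>
    (starMatchingGraph_adj.mp h).2).trans ?_
  -- an edge is determined by its first coordinate `i ∈ {2, 3, 5, 7, …}`, and `(i - 1) / 2 < n / 2`
  calc #{p : Fin n × Fin n | starMatchingRel n p.1 p.2}
      ≤ #(range (n / 2)) := by
        refine card_le_card_of_injOn (fun p => ((p.1 : ℕ) - 1) / 2) (fun p hp => ?_)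
          fun p hp q hq hpq => ?_
        · have := p.2.isLt
          have hp' := (mem_filter.mp hp).2
          simp only [starMatchingRel] at hp'
          rw [mem_coe, mem_range]
          dsimp only
          omega
        · have := p.1.isLt; have := p.2.isLt; have := q.2.isLt
          have hp' := (mem_filter.mp hp).2
          have hq' := (mem_filter.mp hq).2
          simp only [starMatchingRel] at hp' hq' hpq
          ext <;> omega
    _ = n / 2 := card_range _

end StarMatching

/-- for `n ≥ 10`, `sat₃(n, Berge-K₄) ≤ n` if `n` is odd and
`≤ n + 1` if `n` is even: there is a Berge-`K₄`-saturated 3-uniform hypergraph on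
`n` vertices with at most that many edges. -/
theorem stmt18 (n : ℕ) (hn : 10 ≤ n) :
    ∃ H : Finset (Finset (Fin n)),
      (∀ e ∈ H, e.card = 3) ∧
      ¬ HasBergeClique 4 H ∧
      (∀ e : Finset (Fin n), e.card = 3 → e ∉ H →
        HasBergeClique 4 (insert e H)) ∧
      H.card ≤ if Odd n then n else n + 1 := by
  classical
  have h0 := starMatchingGraph_not_adj_of_lt_two (n := n) (x := ⟨0, by omega⟩) (by simp)
  have h1 := starMatchingGraph_not_adj_of_lt_two (n := n) (x := ⟨1, by omega⟩) (by simp)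
  have h23 : (starMatchingGraph n).Adj ⟨2, by omega⟩ ⟨3, by omega⟩ := by
    simp [starMatchingGraph_adj, starMatchingRel]
  have h34 : (starMatchingGraph n).Adj ⟨3, by omega⟩ ⟨4, by omega⟩ := by
    simp [starMatchingGraph_adj, starMatchingRel]
  refine ⟨doubleCone (starMatchingGraph n) ⟨0, by omega⟩ ⟨1, by omega⟩ ⟨2, by omega⟩,
    fun e he => card_eq_three_of_mem_doubleCone (by simp) (by simp) (by simp) h0 h1 he,
    not_hasBergeClique_doubleCone starMatchingGraph_isStarForest h0 h1,
    fun e he heD => hasBergeClique_insert_doubleCone (by simp) h0 h1 (fun x hx0 hx1 => ?_)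
      starMatchingGraph_isStarForest h23 h34 (by simp) he heD, ?_⟩
  · refine starMatchingGraph_exists_adj (by omega) ?_
    simp only [ne_eq, Fin.ext_iff] at hx0 hx1
    omega
  · calc _ ≤ 2 * #(starMatchingGraph n).edgeFinset + 1 := card_doubleCone_le
      _ ≤ 2 * (n / 2) + 1 := by grw [card_edgeFinset_starMatchingGraph_le]
      _ ≤ _ := by split_ifs with h <;> [obtain ⟨k, rfl⟩ := h; skip] <;> omega
end
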